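/- arXiv:1501.07421 — 6 statements merged into one kernel-verified Lean document; each statement's English description precedes it below -/
import Mathlib

section
/- Let d ∈ ℕ, let B be a d×d complex matrix which is diagonalizable and all of whose eigenvalues have nonpositive real part, and let ψ ∈ ℂ^d satisfy Bψ = 0. Let x₀ ∈ ℝ, let q : [x₀,∞) → ℝ be continuous with q(x) ≥ 0 for all x, and let A : [x₀,∞) → Matrix d d ℂ be continuous with ∫_{x₀}^∞ ‖A(y)‖ dy < ∞. Then there exists a unique bounded continuously differentiable function Φ : [x₀,∞) → ℂ^d such that Φ'(x) = −(q(x)·B + A(x))·Φ(x) for all x ≥ x₀ and Φ(x) → ψ as x → +∞. -/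
/-!
With `Q` a primitive of `q`, a solution tending to `ψ ∈ ker B` is exactly a bounded solution of the
Volterra equation `Φ x = ψ + ∫_x^∞ exp ((Q y - Q x) • B) (A y (Φ y)) dy`: the difference of the two
sides solves `D' = -q • B D` and tends to `0`, and `exp ((Q x - Q x₀) • B) (D x)` is then constant
and tends to `0`. As `Q` is nondecreasing and `‖exp (t • B)‖ ≤ K` for `t ≥ 0`, the kernel is bounded
by `K ‖A y‖`, so the Volterra operator halves the sup norm weighted by `exp (2 K ∫_x^∞ ‖A‖)`, and
Banach's fixed point theorem gives existence and uniqueness. For the matrix `B = P D P⁻¹` with `D`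
diagonal and spectrum in the closed left half-plane, `‖exp (t • B)‖ ≤ ‖P‖ ‖P⁻¹‖`.
-/

open Filter Topology MeasureTheory

attribute [local instance] Matrix.normedAddCommGroup Matrix.normedSpace

open Set NormedSpace
open scoped BoundedContinuousFunction

-- `NormedSpace.exp` needs a `ℚ`-algebra structure, which is not an instance on real operators.
noncomputable instance ContinuousLinearMap.normedAlgebraRat {E : Type*} [NormedAddCommGroup E]
    [NormedSpace ℝ E] : NormedAlgebra ℚ (E →L[ℝ] E) :=
  .restrictScalars ℚ ℝ _

section IntegralIci

variable {F : Type*} [NormedAddCommGroup F] [NormedSpace ℝ F] {f : ℝ → F} {a x : ℝ}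

theorem hasDerivWithinAt_integral_Ici [CompleteSpace F] (hf : ContinuousOn f (Ici a))
    (hx : x ∈ Ici a) : HasDerivWithinAt (fun u => ∫ t in a..u, f t) (f x) (Ici a) x := by
  have hg : Continuous fun t => f (max a t) :=
    hf.comp_continuous (continuous_const.max continuous_id) fun t => le_max_left a t
  have hgf : ∀ t ∈ Ici a, f (max a t) = f t := fun t ht => by rw [max_eq_right ht]
  refine ((hg.integral_hasStrictDerivAt a x).hasDerivAt.hasDerivWithinAt.congr_of_mem
    (fun u hu => intervalIntegral.integral_congr fun t ht => ?_) hx).congr_deriv (hgf x hx)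
  rw [uIcc_of_le hu] at ht
  exact (hgf t ht.1).symm

theorem hasDerivWithinAt_integral_Ioi [CompleteSpace F] (hf : ContinuousOn f (Ici a))
    (hfi : IntegrableOn f (Ioi a)) (hx : x ∈ Ici a) :
    HasDerivWithinAt (fun u => ∫ t in Ioi u, f t) (-f x) (Ici a) x := by
  refine ((hasDerivWithinAt_integral_Ici hf hx).const_sub (∫ t in Ioi a, f t)).congr_of_mem
    (fun u hu => ?_) hx
  rw [← intervalIntegral.integral_Ioi_sub_Ioi hfi hu, sub_sub_cancel]

theorem monotoneOn_integral_Ici {g : ℝ → ℝ} (hg : ContinuousOn g (Ici a))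
    (hg0 : ∀ x ∈ Ici a, 0 ≤ g x) : MonotoneOn (fun x => ∫ t in a..x, g t) (Ici a) :=
  monotoneOn_of_hasDerivWithinAt_nonneg (convex_Ici a)
    (fun _ hx => (hasDerivWithinAt_integral_Ici hg hx).continuousWithinAt)
    (fun _ hx => (hasDerivWithinAt_integral_Ici hg (interior_subset hx)).mono interior_subset)
    (fun x hx => hg0 x (interior_subset hx))

theorem integral_Ioi_mul_exp_integral_Ioi {g : ℝ → ℝ} {c : ℝ} (hg : ContinuousOn g (Ici a))
    (hg0 : ∀ y ∈ Ici a, 0 ≤ g y) (hgi : IntegrableOn g (Ioi a)) (hc : 0 ≤ c) (hx : a ≤ x) :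
    ∫ y in Ioi x, c * g y * Real.exp (c * ∫ z in Ioi y, g z) =
      Real.exp (c * ∫ z in Ioi x, g z) - 1 := by
  have hderiv : ∀ y ∈ Ici a, HasDerivWithinAt (fun u => -Real.exp (c * ∫ z in Ioi u, g z))
      (c * g y * Real.exp (c * ∫ z in Ioi y, g z)) (Ici a) y := fun y hy =>
    (((hasDerivWithinAt_integral_Ioi hg hgi hy).const_mul c).exp.neg).congr_deriv (by ring)
  have hlim : Tendsto (fun u => -Real.exp (c * ∫ z in Ioi u, g z)) atTop (𝓝 (-1)) := by
    simpa using (((tendsto_integral_Ioi_zero tendsto_id).const_mul c).rexp).neg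
  rw [integral_Ioi_of_hasDerivAt_of_nonneg
    ((hderiv x hx).continuousWithinAt.mono (Ici_subset_Ici.2 hx))
    (fun y hy => (hderiv y (hx.trans hy.out.le)).hasDerivAt (Ici_mem_nhds (hx.trans_lt hy)))
    (fun y hy => by have := hg0 y (hx.trans hy.out.le); positivity) hlim]
  ring

theorem eq_of_hasDerivWithinAt_zero_of_tendsto {l : F}
    (hf : ∀ x ∈ Ici a, HasDerivWithinAt f 0 (Ici a) x) (hlim : Tendsto f atTop (𝓝 l)) :
    ∀ x ∈ Ici a, f x = l := by
  have hconst : ∀ x ∈ Ici a, f x = f a := fun x hx =>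
    constant_of_has_deriv_right_zero
      (fun y hy => (hf y hy.1).continuousWithinAt.mono Icc_subset_Ici_self)
      (fun y hy => (hf y hy.1).mono (Ici_subset_Ici.2 hy.1)) x ⟨hx, le_rfl⟩
  have hfa : f a = l := tendsto_nhds_unique (tendsto_const_nhds.congr'
    ((eventually_ge_atTop a).mono fun x hx => (hconst x hx).symm)) hlim
  exact fun x hx => (hconst x hx).trans hfa

end IntegralIci

namespace BoundedContinuousFunction

theorem continuous_IciExtend {F : Type*} [PseudoMetricSpace F] {a : ℝ} (φ : Ici a →ᵇ F) :
    Continuous (IciExtend φ) :=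
  φ.continuous.comp ((continuous_const.max continuous_id).subtype_mk _)

theorem norm_IciExtend_le {F : Type*} [NormedAddCommGroup F] {a : ℝ} (φ : Ici a →ᵇ F) (x : ℝ) :
    ‖IciExtend φ x‖ ≤ ‖φ‖ :=
  φ.norm_coe_le_norm _

variable {X F : Type*} [TopologicalSpace X] [NormedAddCommGroup F] [NormedSpace ℝ F]
  {w : X →ᵇ ℝ} {T : (X → F) → X → F} {C : ℝ}

@[simp]
theorem smul_apply' (f : X →ᵇ ℝ) (φ : X →ᵇ F) (x : X) : (f • φ) x = f x • φ x := rfl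

theorem exists_contractingWith_inv_smul_comp_smul (hw1 : ∀ x, 1 ≤ w x)
    (hTc : ∀ φ : X →ᵇ F, Continuous (T φ)) (hT0 : ∀ x, ‖T 0 x‖ ≤ C)
    (hT : ∀ (φ₁ φ₂ : X →ᵇ F) (M : ℝ), (∀ x, ‖φ₁ x - φ₂ x‖ ≤ M * w x) →
      ∀ x, ‖T φ₁ x - T φ₂ x‖ ≤ M / 2 * w x) :
    ∃ S : (X →ᵇ F) → X →ᵇ F, ContractingWith (1 / 2) S ∧
      ∀ φ x, S φ x = (w x)⁻¹ • T ⇑(w • φ) x := by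
  have hw0 : ∀ x, 0 < w x := fun x => one_pos.trans_le (hw1 x)
  have hS : ∀ φ₁ φ₂ : X →ᵇ F, ∀ x,
      ‖(w x)⁻¹ • T ⇑(w • φ₁) x - (w x)⁻¹ • T ⇑(w • φ₂) x‖ ≤ dist φ₁ φ₂ / 2 := by
    intro φ₁ φ₂ x
    have hw : ∀ y, ‖(w • φ₁) y - (w • φ₂) y‖ ≤ dist φ₁ φ₂ * w y := fun y => by
      rw [smul_apply', smul_apply', ← smul_sub, norm_smul, Real.norm_of_nonneg (hw0 y).le,
        ← dist_eq_norm, mul_comm]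
      exact mul_le_mul_of_nonneg_right (dist_coe_le_dist y) (hw0 y).le
    rw [← smul_sub, norm_smul, norm_inv, Real.norm_of_nonneg (hw0 x).le, inv_mul_le_iff₀ (hw0 x)]
    linarith [hT _ _ _ hw x]
  refine ⟨fun φ => .ofNormedAddCommGroup (fun x => (w x)⁻¹ • T ⇑(w • φ) x)
    ((w.continuous.inv₀ fun x => (hw0 x).ne').smul (hTc _)) (C + ‖φ‖ / 2) fun x => ?_,
    ⟨by norm_num, LipschitzWith.of_dist_le_mul fun φ₁ φ₂ => ?_⟩, fun _ _ => rfl⟩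
  · have hφ0 := hS φ 0 x
    rw [smul_zero, coe_zero, dist_zero_right] at hφ0
    calc ‖(w x)⁻¹ • T ⇑(w • φ) x‖
        ≤ ‖(w x)⁻¹ • T ⇑(w • φ) x - (w x)⁻¹ • T 0 x‖ + ‖(w x)⁻¹ • T 0 x‖ :=
          (norm_le_insert' _ _).trans_eq (add_comm _ _)
      _ ≤ ‖φ‖ / 2 + C := by
          refine add_le_add hφ0 ?_
          rw [norm_smul, norm_inv, Real.norm_of_nonneg (hw0 x).le]
          exact (inv_mul_le_of_le_mul₀ (hw0 x).le (norm_nonneg _)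
            (le_mul_of_one_le_left (norm_nonneg _) (hw1 x))).trans (hT0 x)
      _ = C + ‖φ‖ / 2 := add_comm _ _
  · rw [dist_le (by positivity)]
    intro x
    rw [dist_eq_norm]
    simpa [div_eq_inv_mul] using hS φ₁ φ₂ x

theorem exists_unique_fixedPoint_of_weighted_contraction [CompleteSpace F]
    (hw1 : ∀ x, 1 ≤ w x) (hTc : ∀ φ : X →ᵇ F, Continuous (T φ)) (hT0 : ∀ x, ‖T 0 x‖ ≤ C)
    (hT : ∀ (φ₁ φ₂ : X →ᵇ F) (M : ℝ), (∀ x, ‖φ₁ x - φ₂ x‖ ≤ M * w x) →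
      ∀ x, ‖T φ₁ x - T φ₂ x‖ ≤ M / 2 * w x) :
    ∃ φ : X →ᵇ F, T φ = φ ∧ ∀ φ' : X →ᵇ F, T φ' = φ' → φ' = φ := by
  have hw0 : ∀ x, 0 < w x := fun x => one_pos.trans_le (hw1 x)
  obtain ⟨S, hS, hSapply⟩ := exists_contractingWith_inv_smul_comp_smul hw1 hTc hT0 hT
  have hfix : ∀ φ, S φ = φ ↔ T ⇑(w • φ) = ⇑(w • φ) := fun φ => by
    simp only [BoundedContinuousFunction.ext_iff, funext_iff, hSapply,
      inv_smul_eq_iff₀ (hw0 _).ne', smul_apply']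
  refine ⟨w • ContractingWith.fixedPoint S hS,
    (hfix _).1 (ContractingWith.fixedPoint_isFixedPt hS), fun φ' hφ' => ?_⟩
  let χ : X →ᵇ F := .ofNormedAddCommGroup (fun x => (w x)⁻¹ • φ' x)
    ((w.continuous.inv₀ fun x => (hw0 x).ne').smul φ'.continuous) ‖φ'‖ fun x => by
      rw [norm_smul, norm_inv, Real.norm_of_nonneg (hw0 x).le]
      exact inv_mul_le_of_le_mul₀ (hw0 x).le (norm_nonneg _)
        ((φ'.norm_coe_le_norm x).trans (le_mul_of_one_le_left (norm_nonneg _) (hw1 x)))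
  have hχ : w • χ = φ' := by
    ext x
    simp [χ, smul_inv_smul₀ (hw0 x).ne']
  rw [← hχ, ← hS.fixedPoint_unique ((hfix χ).2 (hχ ▸ hφ'))]

end BoundedContinuousFunction

variable {E : Type*} [NormedAddCommGroup E] [NormedSpace ℝ E]

namespace ContinuousLinearMap

variable (B : E →L[ℝ] E)

theorem exp_smul_apply_exp_smul [CompleteSpace E] (s t : ℝ) (v : E) :
    exp (s • B) (exp (t • B) v) = exp ((s + t) • B) v := by
  rw [add_smul, exp_add_of_commute (((Commute.refl B).smul_left s).smul_right t)]
  rfl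

theorem commute_exp_smul (t : ℝ) : B * exp (t • B) = exp (t • B) * B :=
  ((Commute.refl B).smul_right t).exp_right

theorem _root_.HasDerivWithinAt.exp_smul [CompleteSpace E] {f : ℝ → ℝ} {f' x : ℝ} {s : Set ℝ}
    (hf : HasDerivWithinAt f f' s x) :
    HasDerivWithinAt (fun y => exp (f y • B)) (f' • (B * exp (f x • B))) s x :=
  (hasDerivAt_exp_smul_const' B (f x)).scomp_hasDerivWithinAt x hf

end ContinuousLinearMap

/-- Standing hypotheses on the system `Φ' = -(q x • B + A x) Φ` on `[x₀, ∞)`. -/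
structure IsReducedSystem (B : E →L[ℝ] E) (K x₀ : ℝ) (q Q : ℝ → ℝ) (A : ℝ → E →L[ℝ] E) :
    Prop where
  norm_exp_smul_le : ∀ t : ℝ, 0 ≤ t → ‖exp (t • B)‖ ≤ K
  hasDerivWithinAt_Q : ∀ x ∈ Ici x₀, HasDerivWithinAt Q (q x) (Ici x₀) x
  monotoneOn_Q : MonotoneOn Q (Ici x₀)
  continuousOn_A : ContinuousOn A (Ici x₀)
  integrableOn_norm_A : IntegrableOn (fun y => ‖A y‖) (Ioi x₀)

noncomputable def volterra (B : E →L[ℝ] E) (Q : ℝ → ℝ) (A : ℝ → E →L[ℝ] E) (Φ : ℝ → E)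
    (x : ℝ) : E :=
  ∫ y in Ioi x, exp ((Q y - Q x) • B) (A y (Φ y))

noncomputable def volterraWeight (K : ℝ) (A : ℝ → E →L[ℝ] E) (x : ℝ) : ℝ :=
  Real.exp (2 * K * ∫ z in Ioi x, ‖A z‖)

def IsBoundedSolution (B : E →L[ℝ] E) (x₀ : ℝ) (q : ℝ → ℝ) (A : ℝ → E →L[ℝ] E) (ψ : E)
    (Φ : ℝ → E) : Prop :=
  (∃ C : ℝ, ∀ x ∈ Ici x₀, ‖Φ x‖ ≤ C) ∧
    (∀ x ∈ Ici x₀, HasDerivWithinAt Φ (-(q x • B (Φ x) + A x (Φ x))) (Ici x₀) x) ∧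
    Tendsto Φ atTop (𝓝 ψ)

section Volterra

variable {B : E →L[ℝ] E} {K x₀ x : ℝ} {q Q : ℝ → ℝ} {A : ℝ → E →L[ℝ] E} {Φ Φ₁ Φ₂ : ℝ → E}
  {C C₁ C₂ : ℝ}

theorem volterra_congr (h : EqOn Φ₁ Φ₂ (Ici x₀)) (hx : x₀ ≤ x) :
    volterra B Q A Φ₁ x = volterra B Q A Φ₂ x :=
  setIntegral_congr_fun measurableSet_Ioi fun y hy => by rw [h (hx.trans hy.out.le)]

theorem volterra_eq_exp_smul_apply [CompleteSpace E]
    (hint : IntegrableOn (fun y => exp ((Q y - Q x₀) • B) (A y (Φ y))) (Ioi x₀)) (hx : x₀ ≤ x) :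
    volterra B Q A Φ x = exp ((Q x₀ - Q x) • B)
      ((∫ y in Ioi x₀, exp ((Q y - Q x₀) • B) (A y (Φ y))) -
        ∫ y in x₀..x, exp ((Q y - Q x₀) • B) (A y (Φ y))) := by
  rw [← intervalIntegral.integral_Ioi_sub_Ioi hint hx, sub_sub_cancel,
    ← ContinuousLinearMap.integral_comp_comm _ (hint.mono_set (Ioi_subset_Ioi hx))]
  refine setIntegral_congr_fun measurableSet_Ioi fun y _ => ?_
  rw [ContinuousLinearMap.exp_smul_apply_exp_smul]
  ring_nf

namespace IsReducedSystem

variable (h : IsReducedSystem B K x₀ q Q A)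
include h

theorem nonneg : 0 ≤ K := (norm_nonneg _).trans (h.norm_exp_smul_le 0 le_rfl)

theorem continuousOn_Q : ContinuousOn Q (Ici x₀) := fun y hy =>
  (h.hasDerivWithinAt_Q y hy).continuousWithinAt

theorem norm_exp_smul_sub_apply_le {y : ℝ} (hx : x₀ ≤ x) (hxy : x ≤ y) (v : E) :
    ‖exp ((Q y - Q x) • B) v‖ ≤ K * ‖v‖ :=
  (ContinuousLinearMap.le_opNorm _ _).trans (mul_le_mul_of_nonneg_right
    (h.norm_exp_smul_le _ (sub_nonneg.2 (h.monotoneOn_Q hx (hx.trans hxy) hxy))) (norm_nonneg _))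

theorem norm_volterra_le {g : ℝ → ℝ} (hx : x₀ ≤ x) (hΦg : ∀ y ∈ Ioi x, ‖Φ y‖ ≤ g y)
    (hg : IntegrableOn (fun y => ‖A y‖ * g y) (Ioi x)) :
    ‖volterra B Q A Φ x‖ ≤ K * ∫ y in Ioi x, ‖A y‖ * g y := by
  rw [← integral_const_mul]
  refine norm_integral_le_of_norm_le (hg.const_mul K)
    (ae_restrict_of_forall_mem measurableSet_Ioi fun y hy => ?_)
  calc ‖exp ((Q y - Q x) • B) (A y (Φ y))‖ ≤ K * ‖A y (Φ y)‖ :=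
        h.norm_exp_smul_sub_apply_le hx hy.out.le _
    _ ≤ K * (‖A y‖ * g y) := mul_le_mul_of_nonneg_left ((ContinuousLinearMap.le_opNorm _ _).trans
        (mul_le_mul_of_nonneg_left (hΦg y hy) (norm_nonneg _))) h.nonneg

theorem tendsto_volterra (hΦC : ∀ y ∈ Ici x₀, ‖Φ y‖ ≤ C) :
    Tendsto (volterra B Q A Φ) atTop (𝓝 0) := by
  have hint : IntegrableOn (fun y => ‖A y‖ * C) (Ioi x₀) := h.integrableOn_norm_A.mul_const C
  have hlim := (tendsto_integral_Ioi_zero (μ := volume) (f := fun y => ‖A y‖ * C)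
    tendsto_id).const_mul K
  rw [mul_zero] at hlim
  refine squeeze_zero_norm' ?_ hlim
  filter_upwards [eventually_ge_atTop x₀] with x hx
  exact h.norm_volterra_le hx (fun y hy => hΦC y (hx.trans hy.out.le))
    (hint.mono_set (Ioi_subset_Ioi hx))

theorem continuousOn_volterraWeight : ContinuousOn (volterraWeight K A) (Ici x₀) :=
  Real.continuous_exp.comp_continuousOn (continuousOn_const.mul fun _ hy =>
    (hasDerivWithinAt_integral_Ioi h.continuousOn_A.norm h.integrableOn_norm_A
      hy).continuousWithinAt)

theorem one_le_volterraWeight (y : ℝ) : 1 ≤ volterraWeight K A y :=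
  Real.one_le_exp (mul_nonneg (by linarith [h.nonneg])
    (setIntegral_nonneg measurableSet_Ioi fun _ _ => norm_nonneg _))

theorem volterraWeight_le {y : ℝ} (hy : x₀ ≤ y) :
    volterraWeight K A y ≤ volterraWeight K A x₀ :=
  Real.exp_le_exp.2 (mul_le_mul_of_nonneg_left (setIntegral_mono_set h.integrableOn_norm_A
    (ae_restrict_of_forall_mem measurableSet_Ioi fun _ _ => norm_nonneg _)
    (Ioi_subset_Ioi hy).eventuallyLE) (by linarith [h.nonneg]))

theorem norm_volterra_le_of_le_volterraWeight {M : ℝ} (hx : x₀ ≤ x) (hM : 0 ≤ M)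
    (hΦ : ∀ y ∈ Ioi x, ‖Φ y‖ ≤ M * volterraWeight K A y) :
    ‖volterra B Q A Φ x‖ ≤ M / 2 * volterraWeight K A x := by
  have hint : IntegrableOn (fun y => ‖A y‖ * (M * volterraWeight K A y)) (Ioi x) := by
    refine Integrable.mul_bdd (c := M * volterraWeight K A x₀)
      (h.integrableOn_norm_A.mono_set (Ioi_subset_Ioi hx)) ?_
      (ae_restrict_of_forall_mem measurableSet_Ioi fun y hy => ?_)
    · exact ((continuousOn_const.mul h.continuousOn_volterraWeight).mono
        (Ioi_subset_Ici_self.trans (Ici_subset_Ici.2 hx))).aestronglyMeasurable measurableSet_Ioi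
    · rw [Real.norm_of_nonneg (mul_nonneg hM (zero_le_one.trans (h.one_le_volterraWeight y)))]
      exact mul_le_mul_of_nonneg_left (h.volterraWeight_le (hx.trans hy.out.le)) hM
  -- `2 K ‖A‖ * volterraWeight K A` is minus the derivative of `volterraWeight K A`.
  calc ‖volterra B Q A Φ x‖ ≤ K * ∫ y in Ioi x, ‖A y‖ * (M * volterraWeight K A y) :=
        h.norm_volterra_le hx hΦ hint
    _ = M / 2 * ∫ y in Ioi x, 2 * K * ‖A y‖ * Real.exp (2 * K * ∫ z in Ioi y, ‖A z‖) := by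
        rw [← integral_const_mul, ← integral_const_mul]
        congr 1 with y
        simp only [volterraWeight]
        ring
    _ = M / 2 * (volterraWeight K A x - 1) := by
        rw [integral_Ioi_mul_exp_integral_Ioi h.continuousOn_A.norm (fun _ _ => norm_nonneg _)
          h.integrableOn_norm_A (by linarith [h.nonneg]) hx, volterraWeight]
    _ ≤ M / 2 * volterraWeight K A x := by linarith

variable [CompleteSpace E]

theorem continuousOn_kernel (hΦ : ContinuousOn Φ (Ici x₀)) (z : ℝ) :
    ContinuousOn (fun y => exp ((Q y - Q z) • B) (A y (Φ y))) (Ici x₀) :=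
  (exp_continuous.comp_continuousOn ((h.continuousOn_Q.sub continuousOn_const).smul
    continuousOn_const)).clm_apply (h.continuousOn_A.clm_apply hΦ)

theorem integrableOn_kernel (hΦ : ContinuousOn Φ (Ici x₀)) (hΦC : ∀ y ∈ Ici x₀, ‖Φ y‖ ≤ C)
    (hx : x₀ ≤ x) : IntegrableOn (fun y => exp ((Q y - Q x) • B) (A y (Φ y))) (Ioi x) := by
  refine Integrable.mono'
    (((h.integrableOn_norm_A.mono_set (Ioi_subset_Ioi hx)).mul_const C).const_mul K)
    (((h.continuousOn_kernel hΦ x).mono (Ioi_subset_Ici_self.trans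
      (Ici_subset_Ici.2 hx))).aestronglyMeasurable measurableSet_Ioi)
    (ae_restrict_of_forall_mem measurableSet_Ioi fun y hy => ?_)
  calc ‖exp ((Q y - Q x) • B) (A y (Φ y))‖ ≤ K * ‖A y (Φ y)‖ :=
        h.norm_exp_smul_sub_apply_le hx hy.out.le _
    _ ≤ K * (‖A y‖ * C) := mul_le_mul_of_nonneg_left ((ContinuousLinearMap.le_opNorm _ _).trans
        (mul_le_mul_of_nonneg_left (hΦC y (hx.trans hy.out.le)) (norm_nonneg _))) h.nonneg

theorem volterra_sub (hΦ₁ : ContinuousOn Φ₁ (Ici x₀)) (hΦ₁C : ∀ y ∈ Ici x₀, ‖Φ₁ y‖ ≤ C₁)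
    (hΦ₂ : ContinuousOn Φ₂ (Ici x₀)) (hΦ₂C : ∀ y ∈ Ici x₀, ‖Φ₂ y‖ ≤ C₂) (hx : x₀ ≤ x) :
    volterra B Q A (Φ₁ - Φ₂) x = volterra B Q A Φ₁ x - volterra B Q A Φ₂ x := by
  simp only [volterra, ← integral_sub (h.integrableOn_kernel hΦ₁ hΦ₁C hx)
    (h.integrableOn_kernel hΦ₂ hΦ₂C hx), Pi.sub_apply, map_sub]

theorem hasDerivWithinAt_volterra (hΦ : ContinuousOn Φ (Ici x₀))
    (hΦC : ∀ y ∈ Ici x₀, ‖Φ y‖ ≤ C) (hx : x ∈ Ici x₀) :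
    HasDerivWithinAt (volterra B Q A Φ) (-(q x • B (volterra B Q A Φ x) + A x (Φ x)))
      (Ici x₀) x := by
  have hint := h.integrableOn_kernel hΦ hΦC le_rfl
  have hU := ((h.hasDerivWithinAt_Q x hx).const_sub (Q x₀)).exp_smul B
  have hI := (hasDerivWithinAt_integral_Ici (h.continuousOn_kernel hΦ x₀) hx).const_sub
    (∫ y in Ioi x₀, exp ((Q y - Q x₀) • B) (A y (Φ y)))
  refine ((hU.clm_apply hI).congr_of_mem (fun y hy => volterra_eq_exp_smul_apply hint hy)
    hx).congr_deriv ?_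
  rw [volterra_eq_exp_smul_apply hint hx]
  simp [ContinuousLinearMap.exp_smul_apply_exp_smul]
  abel

theorem continuousOn_volterra (hΦ : ContinuousOn Φ (Ici x₀))
    (hΦC : ∀ y ∈ Ici x₀, ‖Φ y‖ ≤ C) : ContinuousOn (volterra B Q A Φ) (Ici x₀) := fun _ hx =>
  (h.hasDerivWithinAt_volterra hΦ hΦC hx).continuousWithinAt

theorem norm_volterra_IciExtend_sub_le (φ₁ φ₂ : Ici x₀ →ᵇ E) {M : ℝ}
    (hM : ∀ y : Ici x₀, ‖φ₁ y - φ₂ y‖ ≤ M * volterraWeight K A y) (x : Ici x₀) :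
    ‖volterra B Q A (IciExtend φ₁) x - volterra B Q A (IciExtend φ₂) x‖ ≤
      M / 2 * volterraWeight K A x := by
  have hM0 : 0 ≤ M := nonneg_of_mul_nonneg_left ((norm_nonneg _).trans (hM x))
    (zero_lt_one.trans_le (h.one_le_volterraWeight x))
  rw [← h.volterra_sub φ₁.continuous_IciExtend.continuousOn (fun y _ => φ₁.norm_IciExtend_le y)
    φ₂.continuous_IciExtend.continuousOn (fun y _ => φ₂.norm_IciExtend_le y) x.2]
  refine h.norm_volterra_le_of_le_volterraWeight x.2 hM0 fun y hy => ?_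
  have hy' : y ∈ Ici x₀ := x.2.trans hy.out.le
  rw [Pi.sub_apply, IciExtend_of_mem _ hy', IciExtend_of_mem _ hy']
  exact hM ⟨y, hy'⟩

theorem exists_unique_eq_add_volterra (ψ : E) :
    ∃ Φ : ℝ → E, ContinuousOn Φ (Ici x₀) ∧ (∃ C, ∀ x ∈ Ici x₀, ‖Φ x‖ ≤ C) ∧
      (∀ x ∈ Ici x₀, Φ x = ψ + volterra B Q A Φ x) ∧
      ∀ Φ' : ℝ → E, ContinuousOn Φ' (Ici x₀) → (∃ C, ∀ x ∈ Ici x₀, ‖Φ' x‖ ≤ C) →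
        (∀ x ∈ Ici x₀, Φ' x = ψ + volterra B Q A Φ' x) → EqOn Φ' Φ (Ici x₀) := by
  let w : Ici x₀ →ᵇ ℝ := .ofNormedAddCommGroup (fun y => volterraWeight K A y)
    h.continuousOn_volterraWeight.domRestrict (volterraWeight K A x₀) fun y => by
      rw [Real.norm_of_nonneg (zero_le_one.trans (h.one_le_volterraWeight y))]
      exact h.volterraWeight_le y.2
  obtain ⟨φ, hφ, huniq⟩ :=
    BoundedContinuousFunction.exists_unique_fixedPoint_of_weighted_contraction (w := w)
      (T := fun φ x => ψ + volterra B Q A (IciExtend φ) x) (C := ‖ψ‖)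
      (fun y => h.one_le_volterraWeight y)
      (fun φ => continuous_const.add (h.continuousOn_volterra
        φ.continuous_IciExtend.continuousOn fun y _ => φ.norm_IciExtend_le y).domRestrict)
      (fun x => by simp [volterra, IciExtend])
      (fun φ₁ φ₂ _ hM x => by
        rw [add_sub_add_left_eq_sub]
        exact h.norm_volterra_IciExtend_sub_le φ₁ φ₂ hM x)
  refine ⟨IciExtend φ, φ.continuous_IciExtend.continuousOn,
    ⟨‖φ‖, fun y _ => φ.norm_IciExtend_le y⟩, fun x hx => ?_,
    fun Φ' hΦ' ⟨C', hC'⟩ hΦ'eq x hx => ?_⟩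
  · rw [IciExtend_of_mem _ hx]
    exact (congrFun hφ ⟨x, hx⟩).symm
  · let φ' : Ici x₀ →ᵇ E :=
      .ofNormedAddCommGroup ((Ici x₀).domRestrict Φ') hΦ'.domRestrict C' fun y => hC' y y.2
    have hφ' : φ' = φ := huniq φ' (funext fun y => by
      rw [volterra_congr (Φ₂ := Φ') (fun z hz => IciExtend_of_mem _ hz) y.2, ← hΦ'eq y y.2]
      rfl)
    rw [IciExtend_of_mem _ hx, ← hφ']
    rfl

theorem eqOn_zero_of_hasDerivWithinAt {D : ℝ → E}
    (hD : ∀ x ∈ Ici x₀, HasDerivWithinAt D (-(q x • B (D x))) (Ici x₀) x)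
    (hlim : Tendsto D atTop (𝓝 0)) : EqOn D 0 (Ici x₀) := by
  have hUD : ∀ x ∈ Ici x₀, exp ((Q x - Q x₀) • B) (D x) = 0 := by
    refine eq_of_hasDerivWithinAt_zero_of_tendsto (fun x hx => ?_) ?_
    · refine ((((h.hasDerivWithinAt_Q x hx).sub_const (Q x₀)).exp_smul B).clm_apply
        (hD x hx)).congr_deriv ?_
      rw [ContinuousLinearMap.commute_exp_smul]
      simp
    · refine squeeze_zero_norm' ?_ (by simpa using hlim.norm.const_mul K)
      filter_upwards [eventually_ge_atTop x₀] with x hx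
      exact h.norm_exp_smul_sub_apply_le le_rfl hx _
  intro x hx
  calc D x = exp ((Q x₀ - Q x) • B) (exp ((Q x - Q x₀) • B) (D x)) := by
        rw [ContinuousLinearMap.exp_smul_apply_exp_smul]; simp
    _ = 0 := by rw [hUD x hx, map_zero]

theorem isBoundedSolution_of_eq_add_volterra {ψ : E} (hψ : B ψ = 0)
    (hΦ : ContinuousOn Φ (Ici x₀)) (hΦC : ∀ y ∈ Ici x₀, ‖Φ y‖ ≤ C)
    (hΦeq : ∀ x ∈ Ici x₀, Φ x = ψ + volterra B Q A Φ x) : IsBoundedSolution B x₀ q A ψ Φ := by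
  refine ⟨⟨C, hΦC⟩, fun x hx => ?_, ?_⟩
  · have hV := ((h.hasDerivWithinAt_volterra hΦ hΦC hx).const_add ψ).congr_of_mem hΦeq hx
    convert hV using 4
    rw [hΦeq x hx, map_add, hψ, zero_add]
  · have hlim := (h.tendsto_volterra hΦC).const_add ψ
    rw [add_zero] at hlim
    exact hlim.congr' ((eventually_ge_atTop x₀).mono fun x hx => (hΦeq x hx).symm)

theorem eq_add_volterra_of_isBoundedSolution {ψ : E} (hψ : B ψ = 0)
    (hΦ : IsBoundedSolution B x₀ q A ψ Φ) : ∀ x ∈ Ici x₀, Φ x = ψ + volterra B Q A Φ x := by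
  obtain ⟨⟨C, hC⟩, hderiv, hlim⟩ := hΦ
  have hΦc : ContinuousOn Φ (Ici x₀) := fun x hx => (hderiv x hx).continuousWithinAt
  have hzero := h.eqOn_zero_of_hasDerivWithinAt (D := fun x => Φ x - (ψ + volterra B Q A Φ x))
    (fun x hx => ((hderiv x hx).sub ((h.hasDerivWithinAt_volterra hΦc hC hx).const_add ψ)
      ).congr_deriv (by simp only [map_sub, map_add, hψ, zero_add, smul_sub]; abel))
    (by simpa using hlim.sub ((h.tendsto_volterra hC).const_add ψ))
  exact fun x hx => sub_eq_zero.1 (hzero hx)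

theorem exists_isBoundedSolution_unique {ψ : E} (hψ : B ψ = 0) :
    ∃ Φ, IsBoundedSolution B x₀ q A ψ Φ ∧
      ∀ Φ', IsBoundedSolution B x₀ q A ψ Φ' → EqOn Φ' Φ (Ici x₀) := by
  obtain ⟨Φ, hΦc, ⟨C, hC⟩, hΦeq, huniq⟩ := h.exists_unique_eq_add_volterra ψ
  refine ⟨Φ, h.isBoundedSolution_of_eq_add_volterra hψ hΦc hC hΦeq, fun Φ' hΦ' => ?_⟩
  exact huniq Φ' (fun x hx => (hΦ'.2.1 x hx).continuousWithinAt) hΦ'.1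
    (h.eq_add_volterra_of_isBoundedSolution hψ hΦ')

end IsReducedSystem

end Volterra

namespace Matrix

variable {n : Type*} [Fintype n] [DecidableEq n]

noncomputable def mulVecAlgHom : Matrix n n ℂ →ₐ[ℝ] (n → ℂ) →L[ℝ] (n → ℂ) where
  toFun M := LinearMap.toContinuousLinearMap ((mulVecLin M).restrictScalars ℝ)
  map_one' := by ext; simp
  map_mul' M N := by ext; simp [mulVec_mulVec]
  map_zero' := by ext; simp
  map_add' M N := by ext; simp
  commutes' r := by ext; simp [Algebra.algebraMap_eq_smul_one]

@[simp]
theorem mulVecAlgHom_apply (M : Matrix n n ℂ) (v : n → ℂ) : mulVecAlgHom M v = M *ᵥ v := rfl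

theorem continuous_mulVecAlgHom : Continuous (mulVecAlgHom : Matrix n n ℂ → _) :=
  LinearMap.continuous_of_finiteDimensional mulVecAlgHom.toLinearMap

theorem norm_mulVecAlgHom_le (M : Matrix n n ℂ) :
    ‖mulVecAlgHom M‖ ≤ Fintype.card n * ‖M‖ := by
  refine ContinuousLinearMap.opNorm_le_bound _ (by positivity) fun v => ?_
  rw [mulVecAlgHom_apply, pi_norm_le_iff_of_nonneg (by positivity)]
  intro i
  calc ‖(M *ᵥ v) i‖ ≤ ∑ j, ‖M i j * v j‖ := norm_sum_le _ _
    _ ≤ ∑ _j : n, ‖M‖ * ‖v‖ := Finset.sum_le_sum fun j _ => by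
        rw [norm_mul]
        exact mul_le_mul (norm_entry_le_entrywise_sup_norm M) (norm_le_pi_norm v j)
          (norm_nonneg _) (norm_nonneg _)
    _ = Fintype.card n * ‖M‖ * ‖v‖ := by simp [mul_assoc]

theorem norm_mulVecAlgHom_diagonal_le {e : n → ℂ} (he : ∀ k, ‖e k‖ ≤ 1) :
    ‖mulVecAlgHom (diagonal e)‖ ≤ 1 := by
  refine ContinuousLinearMap.opNorm_le_bound _ zero_le_one fun v => ?_
  rw [one_mul, mulVecAlgHom_apply, pi_norm_le_iff_of_nonneg (norm_nonneg v)]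
  intro k
  rw [mulVec_diagonal, norm_mul]
  exact (mul_le_of_le_one_left (norm_nonneg _) (he k)).trans (norm_le_pi_norm v k)

theorem norm_exp_smul_mulVecAlgHom_diagonal_le {e : n → ℂ} (he : ∀ k, (e k).re ≤ 0) {t : ℝ}
    (ht : 0 ≤ t) : ‖exp (t • mulVecAlgHom (diagonal e))‖ ≤ 1 := by
  let g : (n → ℂ) →+* (n → ℂ) →L[ℝ] (n → ℂ) :=
    (mulVecAlgHom : Matrix n n ℂ →ₐ[ℝ] _).toRingHom.comp (diagonalRingHom n ℂ)
  have hg : Continuous g := continuous_mulVecAlgHom.comp continuous_id.matrix_diagonal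
  have hte : t • mulVecAlgHom (diagonal e) = g (t • e) := by
    simp [g, diagonal_smul]
  rw [hte, ← map_exp g hg]
  refine norm_mulVecAlgHom_diagonal_le fun k => ?_
  rw [Pi.coe_exp, Pi.smul_apply, ← Complex.exp_eq_exp_ℂ, Complex.norm_exp, Real.exp_le_one_iff]
  simpa using mul_nonpos_of_nonneg_of_nonpos ht (he k)

theorem norm_exp_smul_mulVecAlgHom_le {B P D : Matrix n n ℂ} (hP : IsUnit P) (hD : D.IsDiag)
    (hB : B = P * D * P⁻¹) (hspec : ∀ μ ∈ spectrum ℂ B, μ.re ≤ 0) (t : ℝ) (ht : 0 ≤ t) :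
    ‖exp (t • mulVecAlgHom B)‖ ≤ ‖mulVecAlgHom P‖ * ‖mulVecAlgHom P⁻¹‖ := by
  obtain ⟨u, rfl⟩ := hP
  rw [← hD.diagonal_diag, ← coe_units_inv] at hB
  have hspecD : ∀ k, (D k k).re ≤ 0 := fun k => hspec _ (by
    rw [hB, spectrum.units_conjugate, spectrum_diagonal]
    exact ⟨k, rfl⟩)
  let U := Units.map (mulVecAlgHom : Matrix n n ℂ →ₐ[ℝ] _).toMonoidHom u
  have hU : t • mulVecAlgHom B = U * (t • mulVecAlgHom (diagonal D.diag)) * ↑U⁻¹ := by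
    ext v : 1
    simp [U, hB]
  rw [hU, NormedSpace.exp_units_conj]
  calc ‖↑U * exp (t • mulVecAlgHom (diagonal D.diag)) * ↑U⁻¹‖
      ≤ ‖(U : (n → ℂ) →L[ℝ] (n → ℂ))‖ * ‖exp (t • mulVecAlgHom (diagonal D.diag))‖ *
          ‖(↑U⁻¹ : (n → ℂ) →L[ℝ] (n → ℂ))‖ := norm_mul₃_le
    _ ≤ ‖(U : (n → ℂ) →L[ℝ] (n → ℂ))‖ * 1 * ‖(↑U⁻¹ : (n → ℂ) →L[ℝ] (n → ℂ))‖ := by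
      gcongr
      exact norm_exp_smul_mulVecAlgHom_diagonal_le hspecD ht
    _ = _ := by simp [U]

end Matrix

/-- existence and uniqueness of a bounded solution of
`Φ' = −(q·B + A)·Φ` on `[x₀,∞)` with limit `ψ` at `+∞`, where `B` is
diagonalizable with spectrum in the closed left half-plane, `Bψ = 0`,
`q ≥ 0` is continuous and `A` is continuous and integrable at infinity. -/
theorem bounded_solution_exists_unique
    (d : ℕ) (B : Matrix (Fin d) (Fin d) ℂ)
    (hdiag : ∃ (P D : Matrix (Fin d) (Fin d) ℂ),
      IsUnit P ∧ D.IsDiag ∧ B = P * D * P⁻¹)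
    (hspec : ∀ μ ∈ spectrum ℂ B, μ.re ≤ 0)
    (ψ : Fin d → ℂ) (hψ : B.mulVec ψ = 0)
    (x₀ : ℝ) (q : ℝ → ℝ) (hq : ContinuousOn q (Set.Ici x₀))
    (hq0 : ∀ x ∈ Set.Ici x₀, 0 ≤ q x)
    (A : ℝ → Matrix (Fin d) (Fin d) ℂ) (hA : ContinuousOn A (Set.Ici x₀))
    (hAint : IntegrableOn (fun y => ‖A y‖) (Set.Ici x₀)) :
    ∃ Φ : ℝ → (Fin d → ℂ),
      ((∃ C : ℝ, ∀ x ∈ Set.Ici x₀, ‖Φ x‖ ≤ C) ∧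
        (∀ x ∈ Set.Ici x₀, HasDerivWithinAt Φ
          (-(q x • B.mulVec (Φ x) + (A x).mulVec (Φ x))) (Set.Ici x₀) x) ∧
        Tendsto Φ atTop (𝓝 ψ)) ∧
      ∀ Φ' : ℝ → (Fin d → ℂ),
        ((∃ C : ℝ, ∀ x ∈ Set.Ici x₀, ‖Φ' x‖ ≤ C) ∧
          (∀ x ∈ Set.Ici x₀, HasDerivWithinAt Φ'
            (-(q x • B.mulVec (Φ' x) + (A x).mulVec (Φ' x))) (Set.Ici x₀) x) ∧
          Tendsto Φ' atTop (𝓝 ψ)) →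
        Set.EqOn Φ' Φ (Set.Ici x₀) := by
  obtain ⟨P, D, hP, hD, hB⟩ := hdiag
  have hA' : ContinuousOn (fun x => Matrix.mulVecAlgHom (A x)) (Ici x₀) :=
    Matrix.continuous_mulVecAlgHom.comp_continuousOn hA
  have h : IsReducedSystem (Matrix.mulVecAlgHom B)
      (‖Matrix.mulVecAlgHom P‖ * ‖Matrix.mulVecAlgHom P⁻¹‖) x₀ q (fun x => ∫ t in x₀..x, q t)
      (fun x => Matrix.mulVecAlgHom (A x)) :=
    { norm_exp_smul_le := Matrix.norm_exp_smul_mulVecAlgHom_le hP hD hB hspec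
      hasDerivWithinAt_Q := fun x hx => hasDerivWithinAt_integral_Ici hq hx
      monotoneOn_Q := monotoneOn_integral_Ici hq hq0
      continuousOn_A := hA'
      integrableOn_norm_A := Integrable.mono' ((hAint.mono_set Ioi_subset_Ici_self).const_mul d)
        ((hA'.mono Ioi_subset_Ici_self).norm.aestronglyMeasurable measurableSet_Ioi)
        (ae_of_all _ fun y => by simpa using Matrix.norm_mulVecAlgHom_le (A y)) }
  exact h.exists_isBoundedSolution_unique hψ
end

section
/- Let d ∈ ℕ, let B be a d×d complex matrix and β > 0 such that ‖exp(t·B)‖ ≤ β for all t ≥ 0. Let x₀ ∈ ℝ, q : [x₀,∞) → ℝ continuous with q ≥ 0, S(x) = ∫_{x₀}^x q(t) dt, and A : [x₀,∞) → Matrix d d ℂ continuous with ρ̄ := β·∫_{x₀}^∞ ‖A(y)‖ dy < ∞. For a bounded continuous U : [x₀,∞) → ℂ^d define K[U](x) = ∫_x^∞ exp(−(S(x)−S(y))·B)·A(y)·U(y) dy. Then K[U] is a well-defined bounded continuous function, and for every n ≥ 1 the n-th iterate satisfies sup_{x ≥ x₀} ‖Kⁿ[U](x)‖ ≤ (ρ̄ⁿ/n!)·sup_{x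 ≥ x₀} ‖U(x)‖. -/
/-!
Write `g x = ∫_{y ≥ x} ‖A y‖`. Since `S` is nondecreasing, the kernel satisfies
`‖exp(-(S x - S y) • B)‖ ≤ β` for `y ≥ x`, so `‖V y‖ ≤ c g(y)^m` implies
`‖K[V](x)‖ ≤ β c ∫_{y ≥ x} ‖A y‖ g(y)^m dy = β c g(x)^(m+1)/(m+1)`, the integral being exact
because `-g' = ‖A‖` and `g → 0` at infinity. By induction `‖Kⁿ[U](x)‖ ≤ (β g x)ⁿ/n! · sup ‖U‖`,
and `β g x ≤ β g x₀ = ρ`. Continuity of `K[V]` comes from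
`exp(-(S x - S y) • B) = exp(-(S x - S x₀) • B) exp(-(S x₀ - S y) • B)`, which writes `K[V](x)` as
a continuous matrix function applied to a tail integral of a fixed integrable function.
-/

open MeasureTheory

attribute [local instance] Matrix.linftyOpNormedAddCommGroup Matrix.linftyOpNormedRing
  Matrix.linftyOpNormedAlgebra

open Set Filter Topology Matrix

section TailIntegral

variable {E : Type*} [NormedAddCommGroup E] [NormedSpace ℝ E] {f : ℝ → E} {a : ℝ}

theorem continuousOn_Ici_intervalIntegral (hf : ContinuousOn f (Ici a)) :
    ContinuousOn (fun x => ∫ t in a..x, f t) (Ici a) := by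
  intro x (hx : a ≤ x)
  have hax : a ≤ x + 1 := by linarith
  have hIcc : ContinuousOn (fun x => ∫ t in a..x, f t) (Icc a (x + 1)) := by
    rw [← uIcc_of_le hax]
    refine intervalIntegral.continuousOn_primitive_interval
      ((hf.mono ?_).integrableOn_compact isCompact_uIcc)
    exact uIcc_of_le hax ▸ Icc_subset_Ici_self
  refine (hIcc x ⟨hx, by linarith⟩).mono_of_mem_nhdsWithin ?_
  exact mem_of_superset (inter_mem_nhdsWithin _ (Iio_mem_nhds (lt_add_one x)))
    fun u hu => ⟨hu.1, hu.2.le⟩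

theorem integral_Ici_eq_sub_intervalIntegral (hf : IntegrableOn f (Ici a)) {x : ℝ}
    (hx : a ≤ x) : ∫ t in Ici x, f t = (∫ t in Ici a, f t) - ∫ t in a..x, f t := by
  rw [integral_Ici_eq_integral_Ioi, integral_Ici_eq_integral_Ioi,
    ← intervalIntegral.integral_Ioi_sub_Ioi (hf.mono_set Ioi_subset_Ici_self) hx, sub_sub_cancel]

theorem hasDerivAt_integral_Ici [CompleteSpace E] (hf : IntegrableOn f (Ici a)) {y : ℝ}
    (hy : a < y) (hfy : ContinuousAt f y) : HasDerivAt (fun x => ∫ t in Ici x, f t) (-f y) y := by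
  have hprim : HasDerivAt (fun x => ∫ t in a..x, f t) (f y) y :=
    intervalIntegral.integral_hasDerivAt_right
      ((intervalIntegrable_iff_integrableOn_Icc_of_le hy.le).2 (hf.mono_set Icc_subset_Ici_self))
      ⟨Ici a, Ici_mem_nhds hy, hf.aestronglyMeasurable⟩ hfy
  refine (hprim.const_sub (∫ t in Ici a, f t)).congr_of_eventuallyEq ?_
  filter_upwards [Ioi_mem_nhds hy] with x hx
  exact integral_Ici_eq_sub_intervalIntegral hf hx.le

theorem tendsto_integral_Ici_atTop (hf : IntegrableOn f (Ici a)) :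
    Tendsto (fun x => ∫ t in Ici x, f t) atTop (𝓝 0) := by
  have hlim := (intervalIntegral_tendsto_integral_Ioi a (hf.mono_set Ioi_subset_Ici_self)
    tendsto_id).const_sub (∫ t in Ici a, f t)
  rw [← integral_Ici_eq_integral_Ioi, sub_self] at hlim
  refine hlim.congr' ?_
  filter_upwards [eventually_ge_atTop a] with x hx
  exact (integral_Ici_eq_sub_intervalIntegral hf hx).symm

end TailIntegral

theorem monotoneOn_Ici_intervalIntegral {f : ℝ → ℝ} {a : ℝ} (hf : ContinuousOn f (Ici a))
    (hf0 : ∀ x ∈ Ici a, 0 ≤ f x) : MonotoneOn (fun x => ∫ t in a..x, f t) (Ici a) := by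
  intro x (hx : a ≤ x) y (hy : a ≤ y) hxy
  have hint : ∀ z, a ≤ z → IntervalIntegrable f volume a z := fun z hz =>
    (hf.mono (uIcc_of_le hz ▸ Icc_subset_Ici_self)).intervalIntegrable
  rw [← sub_nonneg, intervalIntegral.integral_interval_sub_left (hint y hy) (hint x hx)]
  exact intervalIntegral.integral_nonneg hxy fun t ht => hf0 t (hx.trans ht.1)

section PowerOfTail

variable {f : ℝ → ℝ} {a : ℝ}

theorem hasDerivAt_neg_integral_Ici_pow_div (hf : IntegrableOn f (Ici a))
    (hfc : ContinuousOn f (Ici a)) (m : ℕ) {y : ℝ} (hy : a < y) :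
    HasDerivAt (fun x => -(∫ t in Ici x, f t) ^ (m + 1) / (m + 1))
      (f y * (∫ t in Ici y, f t) ^ m) y := by
  refine (((hasDerivAt_integral_Ici hf hy (hfc.continuousAt (Ici_mem_nhds hy))).fun_pow
    (m + 1)).fun_neg.div_const ((m : ℝ) + 1)).congr_deriv ?_
  rw [Nat.add_sub_cancel]
  push_cast
  field_simp

theorem tendsto_neg_integral_Ici_pow_div (hf : IntegrableOn f (Ici a)) (m : ℕ) :
    Tendsto (fun x => -(∫ t in Ici x, f t) ^ (m + 1) / (m + 1)) atTop (𝓝 0) := by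
  simpa using (((tendsto_integral_Ici_atTop hf).pow (m + 1)).neg.div_const ((m : ℝ) + 1))

theorem integrableOn_mul_integral_Ici_pow (hf : IntegrableOn f (Ici a))
    (hfc : ContinuousOn f (Ici a)) (hf0 : ∀ y ∈ Ici a, 0 ≤ f y) (m : ℕ) {x : ℝ} (hx : a ≤ x) :
    IntegrableOn (fun y => f y * (∫ t in Ici y, f t) ^ m) (Ici x) := by
  rw [integrableOn_Ici_iff_integrableOn_Ioi]
  refine integrableOn_Ioi_deriv_of_nonneg ?_
    (fun y hy => hasDerivAt_neg_integral_Ici_pow_div hf hfc m (hx.trans_lt hy))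
    (fun y hy => ?_) (tendsto_neg_integral_Ici_pow_div hf m)
  · exact ((hf.continuousOn_Ici_primitive_Ici.mono (Ici_subset_Ici.2 hx)).pow
      (m + 1)).neg.div_const _ x self_mem_Ici
  · have hy' : a ≤ y := hx.trans hy.out.le
    exact mul_nonneg (hf0 y hy') (pow_nonneg (setIntegral_nonneg measurableSet_Ici
      fun t ht => hf0 t (hy'.trans ht)) m)

theorem integral_mul_integral_Ici_pow (hf : IntegrableOn f (Ici a))
    (hfc : ContinuousOn f (Ici a)) (hf0 : ∀ y ∈ Ici a, 0 ≤ f y) (m : ℕ) {x : ℝ} (hx : a ≤ x) :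
    ∫ y in Ici x, f y * (∫ t in Ici y, f t) ^ m = (∫ t in Ici x, f t) ^ (m + 1) / (m + 1) := by
  rw [integral_Ici_eq_integral_Ioi, integral_Ioi_of_hasDerivAt_of_tendsto ?_
    (fun y hy => hasDerivAt_neg_integral_Ici_pow_div hf hfc m (hx.trans_lt hy))
    ((integrableOn_Ici_iff_integrableOn_Ioi).1
      (integrableOn_mul_integral_Ici_pow hf hfc hf0 m hx))
    (tendsto_neg_integral_Ici_pow_div hf m)]
  · ring
  · exact ((hf.continuousOn_Ici_primitive_Ici.mono (Ici_subset_Ici.2 hx)).pow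
      (m + 1)).neg.div_const _ x self_mem_Ici

end PowerOfTail

section Matrix

variable {m n 𝕜 : Type*} [Fintype n]

theorem ContinuousOn.matrix_mulVec {X R : Type*} [TopologicalSpace X] [TopologicalSpace R]
    [NonUnitalNonAssocSemiring R] [ContinuousAdd R] [ContinuousMul R]
    {M : X → Matrix m n R} {v : X → n → R} {s : Set X} (hM : ContinuousOn M s)
    (hv : ContinuousOn v s) : ContinuousOn (fun x => M x *ᵥ v x) s := by
  rw [continuousOn_iff_continuous_domRestrict] at *
  exact hM.matrix_mulVec hv

theorem integral_mulVec {α : Type*} [MeasurableSpace α] {μ : Measure α} [Fintype m] [RCLike 𝕜]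
    (M : Matrix m n 𝕜) {f : α → n → 𝕜} (hf : Integrable f μ) :
    ∫ a, M *ᵥ f a ∂μ = M *ᵥ ∫ a, f a ∂μ :=
  (LinearMap.toContinuousLinearMap (Matrix.mulVecLin M)).integral_comp_comm hf

end Matrix

noncomputable def volterraOp {ι : Type*} [Fintype ι] [DecidableEq ι] (B : Matrix ι ι ℂ)
    (S : ℝ → ℝ) (A : ℝ → Matrix ι ι ℂ) (V : ℝ → ι → ℂ) (x : ℝ) : ι → ℂ :=
  ∫ y in Ici x, NormedSpace.exp (-(S x - S y) • B) *ᵥ (A y *ᵥ V y)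

section VolterraOperator

variable {ι : Type*} [Fintype ι] [DecidableEq ι] {B : Matrix ι ι ℂ} {β x₀ : ℝ} {S : ℝ → ℝ}
  {A : ℝ → Matrix ι ι ℂ} {V : ℝ → ι → ℂ}

theorem exp_neg_sub_smul_eq_mul (B : Matrix ι ι ℂ) (r s t : ℝ) :
    NormedSpace.exp (-(s - t) • B) =
      NormedSpace.exp (-(s - r) • B) * NormedSpace.exp (-(r - t) • B) := by
  rw [← Matrix.exp_add_of_commute _ _ (((Commute.refl B).smul_left _).smul_right _), ← add_smul]
  ring_nf

theorem norm_exp_neg_sub_smul_le (hB : ∀ t : ℝ, 0 ≤ t → ‖NormedSpace.exp (t • B)‖ ≤ β)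
    (hS : MonotoneOn S (Ici x₀)) {x y : ℝ} (hx : x₀ ≤ x) (hxy : x ≤ y) :
    ‖NormedSpace.exp (-(S x - S y) • B)‖ ≤ β := by
  rw [neg_sub]
  exact hB _ (sub_nonneg.2 (hS hx (hx.trans hxy) hxy))

theorem norm_volterra_integrand_le (hB : ∀ t : ℝ, 0 ≤ t → ‖NormedSpace.exp (t • B)‖ ≤ β)
    (hS : MonotoneOn S (Ici x₀)) {w : ℝ → ℝ} (hVw : ∀ y ∈ Ici x₀, ‖V y‖ ≤ w y) {x y : ℝ}
    (hx : x₀ ≤ x) (hxy : x ≤ y) :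
    ‖NormedSpace.exp (-(S x - S y) • B) *ᵥ (A y *ᵥ V y)‖ ≤ β * (‖A y‖ * w y) := by
  have hexp := norm_exp_neg_sub_smul_le hB hS hx hxy
  calc ‖NormedSpace.exp (-(S x - S y) • B) *ᵥ (A y *ᵥ V y)‖
      ≤ ‖NormedSpace.exp (-(S x - S y) • B)‖ * (‖A y‖ * ‖V y‖) :=
        (linfty_opNorm_mulVec _ _).trans
          (mul_le_mul_of_nonneg_left (linfty_opNorm_mulVec _ _) (norm_nonneg _))
    _ ≤ β * (‖A y‖ * w y) := by
        gcongr
        · exact (norm_nonneg _).trans hexp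
        · exact hVw y (hx.trans hxy)

theorem continuousOn_volterra_integrand (hS : ContinuousOn S (Ici x₀))
    (hA : ContinuousOn A (Ici x₀)) (hV : ContinuousOn V (Ici x₀)) (x : ℝ) :
    ContinuousOn (fun y => NormedSpace.exp (-(S x - S y) • B) *ᵥ (A y *ᵥ V y)) (Ici x₀) :=
  (NormedSpace.exp_continuous.comp_continuousOn
    (((continuousOn_const.sub hS).neg).smul continuousOn_const)).matrix_mulVec
    (hA.matrix_mulVec hV)

theorem integrableOn_volterra_integrand
    (hB : ∀ t : ℝ, 0 ≤ t → ‖NormedSpace.exp (t • B)‖ ≤ β) (hSm : MonotoneOn S (Ici x₀))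
    (hSc : ContinuousOn S (Ici x₀)) (hA : ContinuousOn A (Ici x₀)) (hV : ContinuousOn V (Ici x₀))
    {w : ℝ → ℝ} (hVw : ∀ y ∈ Ici x₀, ‖V y‖ ≤ w y)
    (hw : IntegrableOn (fun y => ‖A y‖ * w y) (Ici x₀)) {x : ℝ} (hx : x₀ ≤ x) :
    IntegrableOn (fun y => NormedSpace.exp (-(S x - S y) • B) *ᵥ (A y *ᵥ V y)) (Ici x) :=
  Integrable.mono' ((hw.mono_set (Ici_subset_Ici.2 hx)).const_mul β)
    (((continuousOn_volterra_integrand hSc hA hV x).mono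
      (Ici_subset_Ici.2 hx)).aestronglyMeasurable measurableSet_Ici)
    (ae_restrict_of_forall_mem measurableSet_Ici fun _ hy =>
      norm_volterra_integrand_le hB hSm hVw hx hy)

theorem norm_volterraOp_le (hB : ∀ t : ℝ, 0 ≤ t → ‖NormedSpace.exp (t • B)‖ ≤ β)
    (hSm : MonotoneOn S (Ici x₀)) {w : ℝ → ℝ} (hVw : ∀ y ∈ Ici x₀, ‖V y‖ ≤ w y)
    (hw : IntegrableOn (fun y => ‖A y‖ * w y) (Ici x₀)) {x : ℝ} (hx : x₀ ≤ x) :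
    ‖volterraOp B S A V x‖ ≤ β * ∫ y in Ici x, ‖A y‖ * w y := by
  rw [← integral_const_mul]
  exact norm_integral_le_of_norm_le ((hw.mono_set (Ici_subset_Ici.2 hx)).const_mul β)
    (ae_restrict_of_forall_mem measurableSet_Ici fun _ hy =>
      norm_volterra_integrand_le hB hSm hVw hx hy)

theorem continuousOn_volterraOp (hSc : ContinuousOn S (Ici x₀))
    (hint : IntegrableOn
      (fun y => NormedSpace.exp (-(S x₀ - S y) • B) *ᵥ (A y *ᵥ V y)) (Ici x₀)) :
    ContinuousOn (volterraOp B S A V) (Ici x₀) := by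
  have hfac : ∀ x ∈ Ici x₀, volterraOp B S A V x = NormedSpace.exp (-(S x - S x₀) • B) *ᵥ
      ∫ y in Ici x, NormedSpace.exp (-(S x₀ - S y) • B) *ᵥ (A y *ᵥ V y) := by
    intro x hx
    rw [volterraOp, ← integral_mulVec _ (hint.mono_set (Ici_subset_Ici.2 hx))]
    congr 1
    funext y
    rw [exp_neg_sub_smul_eq_mul B (S x₀) (S x) (S y), ← mulVec_mulVec]
  refine ContinuousOn.congr ?_ hfac
  exact (NormedSpace.exp_continuous.comp_continuousOn
    (((hSc.sub continuousOn_const).neg).smul continuousOn_const)).matrix_mulVec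
    hint.continuousOn_Ici_primitive_Ici

theorem continuousOn_volterraOp_and_norm_le_tail_pow
    (hB : ∀ t : ℝ, 0 ≤ t → ‖NormedSpace.exp (t • B)‖ ≤ β)
    (hSm : MonotoneOn S (Ici x₀)) (hSc : ContinuousOn S (Ici x₀)) (hA : ContinuousOn A (Ici x₀))
    (hAint : IntegrableOn (fun y => ‖A y‖) (Ici x₀)) (hV : ContinuousOn V (Ici x₀)) {c : ℝ}
    {m : ℕ} (hVle : ∀ y ∈ Ici x₀, ‖V y‖ ≤ c * (∫ t in Ici y, ‖A t‖) ^ m) :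
    ContinuousOn (volterraOp B S A V) (Ici x₀) ∧ ∀ x ∈ Ici x₀,
      ‖volterraOp B S A V x‖ ≤ β * c * (∫ t in Ici x, ‖A t‖) ^ (m + 1) / (m + 1) := by
  have hAnorm0 : ∀ y ∈ Ici x₀, 0 ≤ ‖A y‖ := fun y _ => norm_nonneg _
  have hw : IntegrableOn (fun y => ‖A y‖ * (c * (∫ t in Ici y, ‖A t‖) ^ m)) (Ici x₀) := by
    have h := (integrableOn_mul_integral_Ici_pow hAint hA.norm hAnorm0 m le_rfl).const_mul c
    simp only [mul_left_comm c] at h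
    exact h
  refine ⟨continuousOn_volterraOp hSc
    (integrableOn_volterra_integrand hB hSm hSc hA hV hVle hw le_rfl), fun x hx => ?_⟩
  calc ‖volterraOp B S A V x‖ ≤ β * ∫ y in Ici x, ‖A y‖ * (c * (∫ t in Ici y, ‖A t‖) ^ m) :=
        norm_volterraOp_le hB hSm hVle hw hx
    _ = β * c * (∫ t in Ici x, ‖A t‖) ^ (m + 1) / (m + 1) := by
        simp only [mul_left_comm _ c, integral_const_mul,
          integral_mul_integral_Ici_pow hAint hA.norm hAnorm0 m hx]
        ring

theorem continuousOn_volterraOp_iterate_and_norm_le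
    (hB : ∀ t : ℝ, 0 ≤ t → ‖NormedSpace.exp (t • B)‖ ≤ β)
    (hSm : MonotoneOn S (Ici x₀)) (hSc : ContinuousOn S (Ici x₀)) (hA : ContinuousOn A (Ici x₀))
    (hAint : IntegrableOn (fun y => ‖A y‖) (Ici x₀)) (hV : ContinuousOn V (Ici x₀)) {C : ℝ}
    (hVC : ∀ y ∈ Ici x₀, ‖V y‖ ≤ C) (n : ℕ) :
    ContinuousOn ((volterraOp B S A)^[n] V) (Ici x₀) ∧ ∀ x ∈ Ici x₀,
      ‖(volterraOp B S A)^[n] V x‖ ≤ C * β ^ n / n.factorial * (∫ t in Ici x, ‖A t‖) ^ n := by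
  induction n with
  | zero => simpa using ⟨hV, hVC⟩
  | succ n ih =>
    rw [Function.iterate_succ_apply']
    obtain ⟨hcont, hle⟩ :=
      continuousOn_volterraOp_and_norm_le_tail_pow hB hSm hSc hA hAint ih.1 ih.2
    refine ⟨hcont, fun x hx => (hle x hx).trans_eq ?_⟩
    rw [Nat.factorial_succ]
    push_cast
    field_simp
    ring

end VolterraOperator

theorem volterra_operator_iterate_bound_general
    (d : ℕ) (B : Matrix (Fin d) (Fin d) ℂ) (β : ℝ)
    (hB : ∀ t : ℝ, 0 ≤ t → ‖NormedSpace.exp (t • B)‖ ≤ β)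
    (x₀ : ℝ) (q : ℝ → ℝ) (hq : ContinuousOn q (Set.Ici x₀))
    (hq0 : ∀ x ∈ Set.Ici x₀, 0 ≤ q x)
    (S : ℝ → ℝ) (hS : ∀ x : ℝ, S x = ∫ t in x₀..x, q t)
    (A : ℝ → Matrix (Fin d) (Fin d) ℂ) (hA : ContinuousOn A (Set.Ici x₀))
    (hAint : IntegrableOn (fun y => ‖A y‖) (Set.Ici x₀))
    (ρ : ℝ) (hρ : ρ = β * ∫ y in Set.Ici x₀, ‖A y‖)
    (K : (ℝ → (Fin d → ℂ)) → (ℝ → (Fin d → ℂ)))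
    (hK : ∀ U : ℝ → (Fin d → ℂ), ∀ x : ℝ, K U x =
      ∫ y in Set.Ici x, (NormedSpace.exp (-(S x - S y) • B)).mulVec
        ((A y).mulVec (U y))) :
    ∀ U : ℝ → (Fin d → ℂ), ContinuousOn U (Set.Ici x₀) →
      (∃ C : ℝ, ∀ x ∈ Set.Ici x₀, ‖U x‖ ≤ C) →
      -- the integral defining K[U] converges
      (∀ x ∈ Set.Ici x₀, IntegrableOn
        (fun y => (NormedSpace.exp (-(S x - S y) • B)).mulVec
          ((A y).mulVec (U y))) (Set.Ici x)) ∧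
      -- K[U] is bounded and continuous
      ContinuousOn (K U) (Set.Ici x₀) ∧
      (∃ C : ℝ, ∀ x ∈ Set.Ici x₀, ‖K U x‖ ≤ C) ∧
      -- factorial bound for the iterates
      (∀ n : ℕ, 1 ≤ n →
        (⨆ x : Set.Ici x₀, ‖(K^[n] U) (x : ℝ)‖) ≤
          ρ ^ n / (n.factorial : ℝ) * ⨆ x : Set.Ici x₀, ‖U (x : ℝ)‖) := by
  intro U hU ⟨C₀, hC₀⟩
  have hSc : ContinuousOn S (Ici x₀) :=
    (continuousOn_Ici_intervalIntegral hq).congr fun x _ => hS x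
  have hSm : MonotoneOn S (Ici x₀) := by
    simpa only [← funext hS] using monotoneOn_Ici_intervalIntegral hq hq0
  obtain rfl : K = volterraOp B S A := funext fun V => funext (hK V)
  have : Nonempty (Ici x₀) := ⟨⟨x₀, self_mem_Ici⟩⟩
  set C := ⨆ x : Ici x₀, ‖U x‖
  have hUC : ∀ x ∈ Ici x₀, ‖U x‖ ≤ C := fun x hx =>
    le_ciSup (f := fun x : Ici x₀ => ‖U x‖) ⟨C₀, forall_mem_range.2 fun y => hC₀ y y.2⟩ ⟨x, hx⟩
  have hiter : ∀ n, ∀ x ∈ Ici x₀, ‖(volterraOp B S A)^[n] U x‖ ≤ ρ ^ n / n.factorial * C := by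
    intro n x hx
    have hC : 0 ≤ C := (norm_nonneg _).trans (hUC x hx)
    have hβ : 0 ≤ β := (norm_nonneg _).trans (hB 0 le_rfl)
    have hβg : β * ∫ t in Ici x, ‖A t‖ ≤ ρ := hρ ▸ mul_le_mul_of_nonneg_left
      (setIntegral_mono_set hAint (ae_of_all _ fun _ => norm_nonneg _)
        (Ici_subset_Ici.2 hx).eventuallyLE) hβ
    calc ‖(volterraOp B S A)^[n] U x‖
        ≤ C * β ^ n / n.factorial * (∫ t in Ici x, ‖A t‖) ^ n :=
          (continuousOn_volterraOp_iterate_and_norm_le hB hSm hSc hA hAint hU hUC n).2 x hx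
      _ = (β * ∫ t in Ici x, ‖A t‖) ^ n / n.factorial * C := by ring
      _ ≤ ρ ^ n / n.factorial * C := by gcongr
  refine ⟨fun x => integrableOn_volterra_integrand hB hSm hSc hA hU hUC (hAint.mul_const C),
    (continuousOn_volterraOp_iterate_and_norm_le hB hSm hSc hA hAint hU hUC 1).1,
    ⟨ρ * C, fun x hx => by simpa using hiter 1 x hx⟩, fun n _ => ciSup_le fun x => hiter n x x.2⟩

/-- the Volterra integral operator
`K[U](x) = ∫_x^∞ exp(−(S(x)−S(y))·B)·A(y)·U(y) dy` is well defined on bounded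
continuous functions and its iterates satisfy the factorial bound
`sup ‖Kⁿ[U]‖ ≤ (ρ̄ⁿ/n!)·sup ‖U‖`. -/
theorem volterra_operator_iterate_bound
    (d : ℕ) (B : Matrix (Fin d) (Fin d) ℂ) (β : ℝ) (hβ : 0 < β)
    (hB : ∀ t : ℝ, 0 ≤ t → ‖NormedSpace.exp (t • B)‖ ≤ β)
    (x₀ : ℝ) (q : ℝ → ℝ) (hq : ContinuousOn q (Set.Ici x₀))
    (hq0 : ∀ x ∈ Set.Ici x₀, 0 ≤ q x)
    (S : ℝ → ℝ) (hS : ∀ x : ℝ, S x = ∫ t in x₀..x, q t)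
    (A : ℝ → Matrix (Fin d) (Fin d) ℂ) (hA : ContinuousOn A (Set.Ici x₀))
    (hAint : IntegrableOn (fun y => ‖A y‖) (Set.Ici x₀))
    (ρ : ℝ) (hρ : ρ = β * ∫ y in Set.Ici x₀, ‖A y‖)
    (K : (ℝ → (Fin d → ℂ)) → (ℝ → (Fin d → ℂ)))
    (hK : ∀ U : ℝ → (Fin d → ℂ), ∀ x : ℝ, K U x =
      ∫ y in Set.Ici x, (NormedSpace.exp (-(S x - S y) • B)).mulVec
        ((A y).mulVec (U y))) :
    ∀ U : ℝ → (Fin d → ℂ), ContinuousOn U (Set.Ici x₀) →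
      (∃ C : ℝ, ∀ x ∈ Set.Ici x₀, ‖U x‖ ≤ C) →
      -- the integral defining K[U] converges
      (∀ x ∈ Set.Ici x₀, IntegrableOn
        (fun y => (NormedSpace.exp (-(S x - S y) • B)).mulVec
          ((A y).mulVec (U y))) (Set.Ici x)) ∧
      -- K[U] is bounded and continuous
      ContinuousOn (K U) (Set.Ici x₀) ∧
      (∃ C : ℝ, ∀ x ∈ Set.Ici x₀, ‖K U x‖ ≤ C) ∧
      -- factorial bound for the iterates
      (∀ n : ℕ, 1 ≤ n →
        (⨆ x : Set.Ici x₀, ‖(K^[n] U) (x : ℝ)‖) ≤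
          ρ ^ n / (n.factorial : ℝ) * ⨆ x : Set.Ici x₀, ‖U (x : ℝ)‖) :=
  volterra_operator_iterate_bound_general d B β hB x₀ q hq hq0 S hS A hA hAint ρ hρ K hK
end

section
/- Let V be a finite-dimensional complex vector space, h⁰ ≥ 2 an integer, M > 0 a real number, and 𝓔 ∈ ℂ. Let H, E, E₀, L be endomorphisms of V satisfying [H,E] = E, [H,E₀] = −(h⁰−1)E₀ and [H,L] = 0. For x > 0 set g(x) = exp(M·(log x)·H). Then for every x > 0 the following identity of endomorphisms holds: g(x) ∘ (x⁻¹·L + E + (x^{M h⁰} − 𝓔)·E₀) ∘ g(x)⁻¹ − M·x⁻¹·H = x^M·(E + E₀) + x⁻¹·(L − M·H) − 𝓔·x^{M(1−h⁰)}·E₀. -/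
open NormedSpace

private lemma semiconj_exp_aux {𝔸 : Type*} [NormedRing 𝔸] [NormedAlgebra ℂ 𝔸]
    [CompleteSpace 𝔸] {x a y : 𝔸} (h : x * a = a * y) :
    exp x * a = a * exp y := by
  have hsc : SemiconjBy a y x := h.symm
  simp only [exp_eq_tsum ℂ]
  rw [← Summable.tsum_mul_right _ (NormedSpace.expSeries_summable' (𝕂 := ℂ) x),
    ← Summable.tsum_mul_left _ (NormedSpace.expSeries_summable' (𝕂 := ℂ) y)]
  congr 1
  funext n
  rw [smul_mul_assoc, mul_smul_comm, (hsc.pow_right n).eq]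

private lemma conj_exp_smul {𝔸 : Type*} [NormedRing 𝔸] [NormedAlgebra ℂ 𝔸]
    [CompleteSpace 𝔸] (H A : 𝔸) (c s : ℂ) (h : H * A - A * H = c • A) :
    exp (s • H) * A * exp (-s • H) = Complex.exp (s * c) • A := by
  have key : (s • H) * A = A * (s • H + (s * c) • 1) := by
    have h1 : H * A = A * H + c • A := by rw [← h]; noncomm_ring
    rw [smul_mul_assoc, h1, mul_add, mul_smul_comm, smul_add, mul_smul_comm, mul_one,
      ← smul_assoc, smul_eq_mul]
  have hcomm : Commute (s • H) ((s * c) • (1 : 𝔸)) :=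
    ((Commute.one_right H).smul_right _).smul_left _
  have h1 : exp ((s * c) • (1 : 𝔸)) = Complex.exp (s * c) • (1 : 𝔸) := by
    rw [← Algebra.algebraMap_eq_smul_one, ← algebraMap_exp_comm,
      ← Algebra.algebraMap_eq_smul_one, Complex.exp_eq_exp_ℂ]
  letI : NormedAlgebra ℚ 𝔸 := NormedAlgebra.restrictScalars ℚ ℂ 𝔸
  have hinv : exp (s • H) * exp (-s • H) = 1 := by
    rw [show (-s • H : 𝔸) = -(s • H) from neg_smul s H,
      ← exp_add_of_commute ((Commute.refl (s • H)).neg_right), add_neg_cancel, exp_zero]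
  rw [semiconj_exp_aux key, exp_add_of_commute hcomm, h1, mul_smul_comm, mul_one,
    mul_smul_comm, smul_mul_assoc, mul_assoc, hinv, mul_one]

/-- the first gauge transformation. If `[H,E] = E`,
`[H,E₀] = −(h⁰−1)E₀` and `[H,L] = 0`, then conjugation by
`g(x) = exp(M·(log x)·H)` turns `L/x + E + (x^{Mh⁰} − 𝓔)E₀` (minus the gauge
term `M·H/x`) into `x^M·(E+E₀) + (L − M·H)/x − 𝓔·x^{M(1−h⁰)}·E₀`. -/
theorem first_gauge_transformation
    (V : Type*) [NormedAddCommGroup V] [NormedSpace ℂ V] [FiniteDimensional ℂ V]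
    (h₀ : ℕ) (hh₀ : 2 ≤ h₀) (M : ℝ) (hM : 0 < M) (𝓔 : ℂ)
    (H E E₀ L : V →L[ℂ] V)
    (hHE : H * E - E * H = E)
    (hHE₀ : H * E₀ - E₀ * H = -((h₀ : ℂ) - 1) • E₀)
    (hHL : H * L - L * H = 0) :
    ∀ x : ℝ, 0 < x →
      NormedSpace.exp (((M * Real.log x : ℝ) : ℂ) • H) *
          ((x : ℂ)⁻¹ • L + E + (((x ^ (M * h₀) : ℝ) : ℂ) - 𝓔) • E₀) *
          NormedSpace.exp (-(((M * Real.log x : ℝ) : ℂ)) • H) -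
        ((M / x : ℝ) : ℂ) • H =
      ((x ^ M : ℝ) : ℂ) • (E + E₀) + (x : ℂ)⁻¹ • (L - (M : ℂ) • H) -
        (𝓔 * ((x ^ (M * (1 - (h₀ : ℝ))) : ℝ) : ℂ)) • E₀ := by
  intro x hx
  set s : ℂ := ((M * Real.log x : ℝ) : ℂ) with hs
  have hE := conj_exp_smul H E 1 s (by rw [hHE, one_smul])
  have hE₀ := conj_exp_smul H E₀ (-((h₀ : ℂ) - 1)) s hHE₀
  have hL := conj_exp_smul H L 0 s (by rw [hHL, zero_smul])
  -- scalar computations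
  have hexpE : Complex.exp (s * 1) = ((x ^ M : ℝ) : ℂ) := by
    rw [mul_one, hs, ← Complex.ofReal_exp]
    congr 1
    rw [Real.rpow_def_of_pos hx, mul_comm]
  have hexpE₀ : Complex.exp (s * -((h₀ : ℂ) - 1)) = ((x ^ (M * (1 - (h₀ : ℝ))) : ℝ) : ℂ) := by
    have : s * -((h₀ : ℂ) - 1) = ((M * Real.log x * (1 - (h₀ : ℝ)) : ℝ) : ℂ) := by
      push_cast [hs]; ring
    rw [this, ← Complex.ofReal_exp]
    congr 1
    rw [Real.rpow_def_of_pos hx]; ring_nf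
  have hexpL : Complex.exp (s * 0) = 1 := by rw [mul_zero, Complex.exp_zero]
  rw [hexpE] at hE
  rw [hexpE₀] at hE₀
  rw [hexpL] at hL
  -- expand the product
  set G := exp (s • H)
  set G' := exp (-s • H)
  have expand : G * ((x : ℂ)⁻¹ • L + E + (((x ^ (M * h₀) : ℝ) : ℂ) - 𝓔) • E₀) * G'
      = (x : ℂ)⁻¹ • (G * L * G') + G * E * G'
        + (((x ^ (M * h₀) : ℝ) : ℂ) - 𝓔) • (G * E₀ * G') := by
    simp only [mul_add, add_mul, mul_smul_comm, smul_mul_assoc]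
  rw [expand, hE, hE₀, hL, one_smul]
  have hpow : ((x ^ (M * h₀) : ℝ) : ℂ) * ((x ^ (M * (1 - (h₀ : ℝ))) : ℝ) : ℂ)
      = ((x ^ M : ℝ) : ℂ) := by
    rw [← Complex.ofReal_mul, ← Real.rpow_add hx,
      show M * (h₀ : ℝ) + M * (1 - (h₀ : ℝ)) = M by ring]
  have hMx : ((M / x : ℝ) : ℂ) = (x : ℂ)⁻¹ * (M : ℂ) := by
    push_cast; ring
  rw [smul_smul, sub_mul, hpow, hMx]
  module
end

section
/- Let V be a finite-dimensional complex normed vector space, M > 0 a real number, and let N, Λ, C be endomorphisms of V satisfying [N,Λ] = −C. For x > 0 set α(x) = x^{−(M+1)}. Then the quantity exp(α(x)·N) ∘ (x^M·Λ + x⁻¹·C) ∘ exp(−α(x)·N) − α'(x)·N − x^M·Λ has operator norm O(x^{−1−M}) as x → +∞. -/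
/-!
Conjugation by `exp A` expands as `Y + [A, Y] + O(‖A‖² ‖Y‖)`. For `A = α(x) N` and
`Y = x^M Λ + C/x` the first-order term contains `α(x) x^M [N, Λ] = -C/x`, which cancels the
Fuchsian term exactly because `α(x) x^M = 1/x`. What is left — `α(x) x⁻¹ [N, C]`, the
second-order remainder `O(α(x)² x^M)` and `α'(x) N` — is `O(x^(-M-2))`.
-/

open Filter Asymptotics Topology

namespace NormedSpace

variable {𝔸 : Type*} [NormedRing 𝔸]

noncomputable def expConjRemainder (A Y : 𝔸) : 𝔸 :=
  exp A * Y * exp (-A) - Y - (A * Y - Y * A)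

variable [CompleteSpace 𝔸]

theorem exp_sub_one_sub_isBigO (𝕂 : Type*) [RCLike 𝕂] [NormedAlgebra 𝕂 𝔸] :
    (fun y : 𝔸 => exp y - 1 - y) =O[𝓝 0] fun y => ‖y‖ ^ 2 := by
  simpa [FormalMultilinearSeries.partialSum, Finset.sum_range_succ, expSeries_apply_eq, sub_sub]
    using (exp_hasFPowerSeriesAt_zero (𝕂 := 𝕂) (𝔸 := 𝔸)).isBigO_sub_partialSum_pow 2

theorem expConjRemainder_isBigO (𝕂 : Type*) [RCLike 𝕂] [NormedAlgebra 𝕂 𝔸] {α : Type*}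
    {l : Filter α} {A : α → 𝔸} (hA : Tendsto A l (𝓝 0)) (Y : α → 𝔸) :
    (fun t => expConjRemainder (A t) (Y t)) =O[l] fun t => ‖A t‖ ^ 2 * ‖Y t‖ := by
  have hA' : Tendsto (fun t => -A t) l (𝓝 0) := by simpa using hA.neg
  have hE := (exp_sub_one_sub_isBigO 𝕂).comp_tendsto hA
  have hF := (exp_sub_one_sub_isBigO 𝕂).comp_tendsto hA'
  have hF_bdd : (fun t => exp (-A t)) =O[l] fun _ => (1 : ℝ) :=
    ((exp_hasFPowerSeriesAt_zero (𝕂 := 𝕂)).continuousAt.tendsto.comp hA').isBigO_one ℝ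
  have h1A_bdd : (fun t => 1 + A t) =O[l] fun _ => (1 : ℝ) :=
    (tendsto_const_nhds.add hA).isBigO_one ℝ
  have hY : Y =O[l] fun t => ‖Y t‖ := (isBigO_refl _ _).norm_right
  have hAn : A =O[l] fun t => ‖A t‖ := (isBigO_refl _ _).norm_right
  have h_split : ∀ t, expConjRemainder (A t) (Y t)
      = (exp (A t) - 1 - A t) * Y t * exp (-A t)
        + (1 + A t) * Y t * (exp (-A t) - 1 - -A t) - A t * Y t * A t := by
    intro t
    rw [expConjRemainder]
    noncomm_ring
  simp_rw [h_split]
  have h₁ : (fun t => (exp (A t) - 1 - A t) * Y t * exp (-A t))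
      =O[l] fun t => ‖A t‖ ^ 2 * ‖Y t‖ := by
    simpa using (hE.mul hY).mul hF_bdd
  have h₂ : (fun t => (1 + A t) * Y t * (exp (-A t) - 1 - -A t))
      =O[l] fun t => ‖A t‖ ^ 2 * ‖Y t‖ :=
    ((h1A_bdd.mul hY).mul hF).congr_right fun t => by simp only [Function.comp, norm_neg]; ring
  have h₃ : (fun t => A t * Y t * A t) =O[l] fun t => ‖A t‖ ^ 2 * ‖Y t‖ :=
    ((hAn.mul hY).mul hAn).congr_right fun t => by ring
  exact (h₁.add h₂).sub h₃

end NormedSpace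

theorem add_commutator_smul_eq_of_commutator_eq_neg {R A : Type*} [CommRing R] [Ring A]
    [Algebra R A] {N Λ C : A} (h : N * Λ - Λ * N = -C) {a p q : R} (hapq : a * p = q) :
    p • Λ + q • C + (a • N * (p • Λ + q • C) - (p • Λ + q • C) * a • N)
      = p • Λ + (a * q) • (N * C - C * N) := by
  have hN : a • N * (p • Λ + q • C) - (p • Λ + q • C) * a • N
      = (a * p) • (N * Λ - Λ * N) + (a * q) • (N * C - C * N) := by
    simp only [mul_add, add_mul, smul_mul_smul_comm, smul_sub]
    module
  rw [hN, h, hapq]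
  module

theorem Asymptotics.isBigO_ofReal_smul_const {α E : Type*} [SeminormedAddCommGroup E]
    [NormedSpace ℂ E] (l : Filter α) (f : α → ℝ) (K : E) :
    (fun x => (f x : ℂ) • K) =O[l] f :=
  isBigO_of_le' (c := ‖K‖) l fun x => by rw [norm_smul, Complex.norm_real, mul_comm]

theorem isBigO_rpow_rpow_atTop_of_le {a b : ℝ} (hab : a ≤ b) :
    (fun x : ℝ => x ^ a) =O[atTop] fun x => x ^ b := by
  refine IsBigO.of_bound 1 ?_
  filter_upwards [eventually_ge_atTop 1] with x hx
  rw [one_mul, Real.norm_of_nonneg (by positivity), Real.norm_of_nonneg (by positivity)]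
  exact Real.rpow_le_rpow_of_exponent_le hx hab

theorem exp_smul_mul_mul_exp_neg_smul_sub_eq {V : Type*} [NormedAddCommGroup V]
    [NormedSpace ℂ V] {M : ℝ} {N Λ C : V →L[ℂ] V} (hNΛ : N * Λ - Λ * N = -C) {x : ℝ}
    (hx : 0 < x) :
    NormedSpace.exp (((x ^ (-(M + 1)) : ℝ) : ℂ) • N) *
          (((x ^ M : ℝ) : ℂ) • Λ + ((x⁻¹ : ℝ) : ℂ) • C) *
          NormedSpace.exp (-((x ^ (-(M + 1)) : ℝ) : ℂ) • N) -
        ((deriv (fun y : ℝ => y ^ (-(M + 1))) x : ℝ) : ℂ) • N - ((x ^ M : ℝ) : ℂ) • Λ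
      = NormedSpace.expConjRemainder (((x ^ (-(M + 1)) : ℝ) : ℂ) • N)
          (((x ^ M : ℝ) : ℂ) • Λ + ((x⁻¹ : ℝ) : ℂ) • C)
        + ((x ^ (-M - 2) : ℝ) : ℂ) • (N * C - C * N + ((M + 1 : ℝ) : ℂ) • N) := by
  have hap : ((x ^ (-(M + 1)) : ℝ) : ℂ) * ((x ^ M : ℝ) : ℂ) = ((x⁻¹ : ℝ) : ℂ) := by
    rw [← Complex.ofReal_mul, ← Real.rpow_add hx, ← Real.rpow_neg_one]
    ring_nf
  have haq : ((x ^ (-(M + 1)) : ℝ) : ℂ) * ((x⁻¹ : ℝ) : ℂ) = ((x ^ (-M - 2) : ℝ) : ℂ) := by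
    rw [← Complex.ofReal_mul, ← Real.rpow_neg_one, ← Real.rpow_add hx]
    ring_nf
  have h_comm := add_commutator_smul_eq_of_commutator_eq_neg hNΛ hap
  rw [haq] at h_comm
  rw [NormedSpace.expConjRemainder, neg_smul, sub_sub _ (_ + _), h_comm, Real.deriv_rpow_const,
    show -(M + 1) - 1 = -M - 2 by ring]
  push_cast
  module

/-- the second gauge transformation. If `[N,Λ] = −C` and
`α(x) = x^{−(M+1)}`, then
`exp(α(x)N)∘(x^M Λ + C/x)∘exp(−α(x)N) − α'(x)·N − x^M·Λ = O(x^{−1−M})`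
as `x → +∞`. -/
theorem second_gauge_transformation
    (V : Type*) [NormedAddCommGroup V] [NormedSpace ℂ V] [FiniteDimensional ℂ V]
    (M : ℝ) (hM : 0 < M) (N Λ C : V →L[ℂ] V)
    (hNΛ : N * Λ - Λ * N = -C)
    (α : ℝ → ℝ) (hα : ∀ x : ℝ, α x = x ^ (-(M + 1))) :
    (fun x : ℝ =>
        NormedSpace.exp (((α x : ℝ) : ℂ) • N) *
            (((x ^ M : ℝ) : ℂ) • Λ + ((x⁻¹ : ℝ) : ℂ) • C) *
            NormedSpace.exp (-(((α x : ℝ) : ℂ)) • N) -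
          ((deriv α x : ℝ) : ℂ) • N - ((x ^ M : ℝ) : ℂ) • Λ)
      =O[atTop] (fun x : ℝ => x ^ (-1 - M)) := by
  obtain rfl : α = fun x => x ^ (-(M + 1)) := funext hα
  have hA : Tendsto (fun x : ℝ => ((x ^ (-(M + 1)) : ℝ) : ℂ) • N) atTop (𝓝 0) := by
    have h := ((Complex.continuous_ofReal.tendsto 0).comp
      (tendsto_rpow_neg_atTop (by linarith : 0 < M + 1))).smul_const N
    rwa [Complex.ofReal_zero, zero_smul] at h
  have hinv : (fun x : ℝ => x⁻¹) =O[atTop] fun x => x ^ M := by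
    simpa [Real.rpow_neg_one] using isBigO_rpow_rpow_atTop_of_le (by linarith : (-1 : ℝ) ≤ M)
  have hB : (fun x : ℝ => ((x ^ M : ℝ) : ℂ) • Λ + ((x⁻¹ : ℝ) : ℂ) • C) =O[atTop] (· ^ M) :=
    (isBigO_ofReal_smul_const _ _ Λ).add ((isBigO_ofReal_smul_const _ _ C).trans hinv)
  have h_size : (fun x : ℝ => (x ^ (-(M + 1))) ^ 2 * x ^ M) =ᶠ[atTop] (· ^ (-M - 2)) := by
    filter_upwards [eventually_gt_atTop 0] with x hx
    rw [← Real.rpow_natCast, ← Real.rpow_mul hx.le, ← Real.rpow_add hx]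
    ring_nf
  have h_rem := (NormedSpace.expConjRemainder_isBigO ℂ hA _).trans
    ((((isBigO_ofReal_smul_const _ _ N).norm_left.pow 2).mul hB.norm_left).congr' .rfl h_size)
  refine (IsBigO.congr' (h_rem.add (isBigO_ofReal_smul_const _ _
      (N * C - C * N + ((M + 1 : ℝ) : ℂ) • N))) ?_ .rfl).trans
    (isBigO_rpow_rpow_atTop_of_le (by linarith))
  filter_upwards [eventually_gt_atTop 0] with x hx
  exact (exp_smul_mul_mul_exp_neg_smul_sub_eq hNΛ hx).symm
end

section
/- Let n ≥ 1 and 1 ≤ i ≤ n, and write I for the imaginary unit. For every subset S of {0, 1, …, n} with exactly i elements one has Re( Σ_{j ∈ S} exp(I·π·(2j − (i−1))/(n+1)) ) ≤ sin(iπ/(n+1))/sin(π/(n+1)), with equality if and only if S = {0, 1, …, i−1}. -/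
open Real Finset

/-! With `θ = π/(n+1)`, the real part of the `j`-th summand is `cos ((2j - (i-1))θ)`. For `j < i`
the angle has absolute value at most `(i-1)θ`, while for `i ≤ j ≤ n` it lies strictly between
`(i-1)θ` and `2π - (i-1)θ`; so `cos ((i-1)θ)` separates the summands with `j < i` from the others,
and exchanging elements shows that every other `i`-subset gives a strictly smaller sum. The
maximal sum telescopes, since `2 sin θ cos ((2j - (i-1))θ) = sin ((2j - i + 2)θ) - sin ((2j - i)θ)`. -/

theorem sum_lt_sum_of_card_eq_of_lt_le {ι M : Type*} [DecidableEq ι] [AddCommMonoid M]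
    [PartialOrder M] [IsOrderedCancelAddMonoid M] {s t : Finset ι} {f : ι → M} {c : M}
    (hcard : #s = #t) (hs : ∀ j ∈ s \ t, f j < c) (ht : ∀ j ∈ t, c ≤ f j) (hne : s ≠ t) :
    ∑ j ∈ s, f j < ∑ j ∈ t, f j := by
  have hst : (s \ t).Nonempty :=
    sdiff_nonempty.2 fun h => hne (eq_of_subset_of_card_le h hcard.ge)
  calc ∑ j ∈ s, f j = ∑ j ∈ s ∩ t, f j + ∑ j ∈ s \ t, f j := (sum_inter_add_sum_sdiff ..).symm
    _ < ∑ j ∈ s ∩ t, f j + ∑ j ∈ t \ s, f j := by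
      gcongr
      calc ∑ j ∈ s \ t, f j < #(s \ t) • c := by simpa using sum_lt_sum_of_nonempty hst hs
        _ = #(t \ s) • c := by rw [card_sdiff_comm hcard]
        _ ≤ ∑ j ∈ t \ s, f j := card_nsmul_le_sum _ _ _ fun j hj => ht j (mem_sdiff.1 hj).1
    _ = ∑ j ∈ t, f j := by rw [inter_comm, sum_inter_add_sum_sdiff]

theorem Fin.map_valEmbedding_filter_val_lt {n i : ℕ} (hi : i ≤ n) :
    (univ.filter fun j : Fin n => (j : ℕ) < i).map Fin.valEmbedding = range i := by
  ext k
  simp only [mem_map, mem_filter, mem_univ, true_and, Fin.valEmbedding_apply, mem_range]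
  exact ⟨fun ⟨j, hj, hjk⟩ => hjk ▸ hj, fun hk => ⟨⟨k, by omega⟩, hk, rfl⟩⟩

theorem sin_mul_sum_range_cos (θ : ℝ) (i : ℕ) :
    sin θ * ∑ j ∈ range i, cos ((2 * j - (i - 1)) * θ) = sin (i * θ) := by
  have htel (j : ℕ) : 2 * (sin θ * cos ((2 * j - (i - 1)) * θ))
      = sin ((2 * (j + 1 : ℕ) - i) * θ) - sin ((2 * j - i) * θ) := by
    rw [← mul_assoc, two_mul_sin_mul_cos,
      show θ - (2 * j - (i - 1)) * θ = -((2 * j - i) * θ) by ring, sin_neg]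
    push_cast
    ring_nf
  have := sum_range_sub (fun j : ℕ => sin ((2 * j - i) * θ)) i
  simp only [← htel, ← mul_sum, Nat.cast_zero] at this
  rw [show (2 * (i : ℝ) - i) * θ = i * θ by ring,
    show (2 * 0 - (i : ℝ)) * θ = -(i * θ) by ring, sin_neg] at this
  linarith

theorem cos_lt_cos_of_lt_of_lt_two_pi_sub {a x : ℝ} (ha : 0 ≤ a) (hax : a < x)
    (hx : x < 2 * π - a) : cos x < cos a := by
  rcases le_or_gt x π with hxπ | hxπ
  · exact cos_lt_cos_of_nonneg_of_le_pi ha hxπ hax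
  · rw [← cos_two_pi_sub x]
    exact cos_lt_cos_of_nonneg_of_le_pi ha (by linarith) (by linarith)

theorem cos_le_cos_of_abs_le {a x : ℝ} (ha : a ≤ π) (hx : |x| ≤ a) : cos a ≤ cos x := by
  rw [← cos_abs x]
  exact cos_le_cos_of_nonneg_of_le_pi (abs_nonneg x) ha hx

theorem cos_le_cos_twisted_of_lt {n i k : ℕ} (hin : i ≤ n + 1) (hk : k < i) :
    cos ((i - 1) * (π / (n + 1))) ≤ cos ((2 * k - (i - 1)) * (π / (n + 1))) := by
  have hθ : 0 < π / (n + 1) := by positivity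
  have hk' : (k : ℝ) + 1 ≤ i := by exact_mod_cast hk
  have hin' : (i : ℝ) ≤ n + 1 := by exact_mod_cast hin
  apply cos_le_cos_of_abs_le
  · calc (i - 1) * (π / (n + 1)) ≤ (n + 1) * (π / (n + 1)) := by gcongr; linarith
      _ = π := by field_simp
  · rw [abs_mul, abs_of_pos hθ]
    gcongr
    rw [abs_le]
    constructor <;> linarith

theorem cos_twisted_lt_of_le {n i k : ℕ} (hi : 1 ≤ i) (hik : i ≤ k) (hk : k ≤ n) :
    cos ((2 * k - (i - 1)) * (π / (n + 1))) < cos ((i - 1) * (π / (n + 1))) := by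
  have hθ : 0 < π / (n + 1) := by positivity
  have hπ : 2 * π = (2 * n + 2) * (π / (n + 1)) := by field_simp
  have hi' : (1 : ℝ) ≤ i := by exact_mod_cast hi
  have hik' : (i : ℝ) ≤ k := by exact_mod_cast hik
  have hk' : (k : ℝ) ≤ n := by exact_mod_cast hk
  apply cos_lt_cos_of_lt_of_lt_two_pi_sub
  · exact mul_nonneg (by linarith) hθ.le
  · exact mul_lt_mul_of_pos_right (by linarith) hθ
  · rw [hπ, ← sub_mul]
    exact mul_lt_mul_of_pos_right (by linarith) hθ

theorem sum_filter_val_lt_cos_twisted {n i : ℕ} (hi : 1 ≤ i) (hin : i ≤ n) :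
    ∑ j ∈ univ.filter (fun j : Fin (n + 1) => (j : ℕ) < i),
        cos ((2 * (j : ℕ) - (i - 1)) * (π / (n + 1))) =
      sin (i * π / (n + 1)) / sin (π / (n + 1)) := by
  have hsin : 0 < sin (π / (n + 1)) := by
    have hn : (1 : ℝ) < n + 1 := by norm_cast; omega
    exact sin_pos_of_pos_of_lt_pi (by positivity) (div_lt_self pi_pos hn)
  rw [eq_div_iff hsin.ne', mul_comm, mul_div_assoc, ← sin_mul_sum_range_cos,
    ← Fin.map_valEmbedding_filter_val_lt (by omega : i ≤ n + 1), sum_map]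
  rfl

theorem re_exp_twisted (n i j : ℕ) :
    (Complex.exp (Complex.I * π * (2 * (j : ℂ) - ((i : ℂ) - 1)) / (n + 1))).re =
      cos ((2 * j - (i - 1)) * (π / (n + 1))) := by
  rw [show Complex.I * π * (2 * (j : ℂ) - ((i : ℂ) - 1)) / (n + 1) =
      ((2 * j - (i - 1)) * (π / (n + 1)) : ℝ) * Complex.I by push_cast; ring,
    Complex.exp_ofReal_mul_I_re]

theorem twisted_exponential_sum_max_general
    (n i : ℕ) (hi : 1 ≤ i) (hin : i ≤ n)
    (S : Finset (Fin (n + 1))) (hS : S.card = i) :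
    (∑ j ∈ S, Complex.exp (Complex.I * π * (2 * (j : ℕ) - ((i : ℂ) - 1)) / (n + 1))).re ≤
      Real.sin (i * π / (n + 1)) / Real.sin (π / (n + 1)) ∧
    ((∑ j ∈ S, Complex.exp (Complex.I * π * (2 * (j : ℕ) - ((i : ℂ) - 1)) / (n + 1))).re =
        Real.sin (i * π / (n + 1)) / Real.sin (π / (n + 1)) ↔
      S = Finset.univ.filter (fun j : Fin (n + 1) => (j : ℕ) < i)) := by
  set T := univ.filter fun j : Fin (n + 1) => (j : ℕ) < i
  have hTcard : #T = i := by
    rw [← card_map Fin.valEmbedding, Fin.map_valEmbedding_filter_val_lt (by omega), card_range]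
  have hlt (hne : S ≠ T) : ∑ j ∈ S, cos ((2 * (j : ℕ) - (i - 1)) * (π / (n + 1))) <
      ∑ j ∈ T, cos ((2 * (j : ℕ) - (i - 1)) * (π / (n + 1))) :=
    sum_lt_sum_of_card_eq_of_lt_le (hS.trans hTcard.symm)
      (fun j hj => cos_twisted_lt_of_le hi (by simpa [T] using (mem_sdiff.1 hj).2) (by omega))
      (fun j hj => cos_le_cos_twisted_of_lt (by omega) (mem_filter.1 hj).2) hne
  simp only [Complex.re_sum, re_exp_twisted, ← sum_filter_val_lt_cos_twisted hi hin]
  refine ⟨?_, fun h => by_contra fun hne => (hlt hne).ne h, fun h => h ▸ rfl⟩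
  rcases eq_or_ne S T with h | h
  · exact h ▸ le_rfl
  · exact (hlt h).le

/-- among all `i`-element subsets `S ⊆ {0,…,n}`, the real part of
`Σ_{j∈S} exp(Iπ(2j − (i−1))/(n+1))` is at most `sin(iπ/(n+1))/sin(π/(n+1))`,
with equality exactly for `S = {0,…,i−1}`. -/
theorem twisted_exponential_sum_max
    (n i : ℕ) (hn : 1 ≤ n) (hi : 1 ≤ i) (hin : i ≤ n)
    (S : Finset (Fin (n + 1))) (hS : S.card = i) :
    (∑ j ∈ S, Complex.exp (Complex.I * π * (2 * (j : ℕ) - ((i : ℂ) - 1)) / (n + 1))).re ≤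
      Real.sin (i * π / (n + 1)) / Real.sin (π / (n + 1)) ∧
    ((∑ j ∈ S, Complex.exp (Complex.I * π * (2 * (j : ℕ) - ((i : ℂ) - 1)) / (n + 1))).re =
        Real.sin (i * π / (n + 1)) / Real.sin (π / (n + 1)) ↔
      S = Finset.univ.filter (fun j : Fin (n + 1) => (j : ℕ) < i)) :=
  twisted_exponential_sum_max_general n i hi hin S hS
end

section
/- Let n ≥ 2, θ = π/(n+1), and I the imaginary unit. For j = 1,…,n and x ∈ ℝ define Ψⱼ(x) = (1/(2πI)) ∫₀^∞ [ e^{Iθ}·(r e^{Iθ})^{j−1}·exp(−x·r·e^{Iθ} − r^{n+1}/(n+1)) − e^{−Iθ}·(r e^{−Iθ})^{j−1}·exp(−x·r·e^{−Iθ} − r^{n+1}/(n+1)) ] dr. Then all these integrals converge absolutely, each Ψⱼ is differentiable on ℝ, and the system Ψⱼ'(x) = −Ψ_{j+1}(x) for j = 1,…,n−1 and Ψₙ'(x) = −x·Ψ₁(x) holds; equivalently, Ψ = (Ψ₁,…,Ψₙ) solves Ψ'(x) + (e + x·e₀)Ψ(x) = 0, where e = Σ_{i=1}^{n−1} E_{i,i+1}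 and e₀ = E_{n,1}. -/
/-!
Parametrize the two rays of the contour by `s = r ε` with `ε = e^{±iθ}`, so that `ε^{n+1} = -1`
and `s^{n+1} = -r^{n+1}`. On each ray, for `|y - x| < 1`, the integrand is dominated by
`r^k e^{(|x| + 1) r - r^{n+1}/(n+1)}`; this gives absolute convergence and lets
us differentiate under the integral sign, where `∂ₓ` multiplies the integrand by `-s`, whence
`Ψⱼ' = -Ψⱼ₊₁`. For `Ψₙ'`, integrate `d/dr e^{-xs + s^{n+1}/(n+1)} = (-x + s^n) ε e^{…}` along one
ray: `∫ s^n ds = x ∫ ds - 1`. The boundary terms `-1` of the two rays cancel in `Ψ`, so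
`Ψₙ' = -x Ψ₁`.
-/

open Real MeasureTheory Set Filter Topology Asymptotics

/-- The integrand of `∫ s^k e^{-xs + s^{n+1}/(n+1)} ds` along the ray `s = r ε`, `ds = ε dr`,
written with `-r^{n+1}` in place of `s^{n+1}` (valid when `ε^{n+1} = -1`). -/
noncomputable def airyRayIntegrand (n k : ℕ) (ε : ℂ) (x r : ℝ) : ℂ :=
  ε * ((r : ℂ) * ε) ^ k * Complex.exp (-(x : ℂ) * r * ε - (r : ℂ) ^ (n + 1) / (n + 1))

noncomputable def airyRayIntegral (n k : ℕ) (ε : ℂ) (x : ℝ) : ℂ :=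
  ∫ r in Ioi (0 : ℝ), airyRayIntegrand n k ε x r

noncomputable def airyMajorant (n k : ℕ) (b r : ℝ) : ℝ :=
  r ^ k * Real.exp (b * r - r ^ (n + 1) / (n + 1))

lemma tendsto_mul_sub_pow_div_atBot {n : ℕ} (hn : 1 ≤ n) (b : ℝ) :
    Tendsto (fun r : ℝ => b * r - r ^ (n + 1) / (n + 1)) atTop atBot := by
  have hpow : Tendsto (fun r : ℝ => r ^ n / (n + 1)) atTop atTop :=
    (tendsto_pow_atTop (by omega)).atTop_div_const (by positivity)
  have hfactor : Tendsto (fun r : ℝ => b - r ^ n / (n + 1)) atTop atBot :=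
    tendsto_atBot_add_const_left _ b (tendsto_neg_atTop_atBot.comp hpow)
  exact (tendsto_id.atTop_mul_atBot₀ hfactor).congr fun r => by simp only [id]; ring

lemma integrableOn_airyMajorant {n : ℕ} (hn : 1 ≤ n) (k : ℕ) (b : ℝ) :
    IntegrableOn (airyMajorant n k b) (Ioi 0) := by
  have hpow : (fun r : ℝ => r ^ k * Real.exp (-r)) =O[atTop] (fun _ => (1 : ℝ)) :=
    (tendsto_pow_mul_exp_neg_atTop_nhds_zero k).isBigO_one ℝ
  have hexp : (fun r : ℝ => Real.exp ((b + 2) * r - r ^ (n + 1) / (n + 1)))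
      =O[atTop] (fun _ => (1 : ℝ)) :=
    (tendsto_exp_atBot.comp (tendsto_mul_sub_pow_div_atBot hn (b + 2))).isBigO_one ℝ
  -- `r^k e^{br - r^{n+1}/(n+1)} = (r^k e^{-r}) · e^{(b+2)r - r^{n+1}/(n+1)} · e^{-r}`
  refine integrable_of_isBigO_exp_neg one_pos
    (Continuous.continuousOn (by unfold airyMajorant; fun_prop)) ?_
  refine ((hpow.mul hexp).mul (isBigO_refl (fun r : ℝ => Real.exp (-1 * r)) atTop)).congr
    (fun r => ?_) (fun r => by simp)
  simp only [airyMajorant, mul_assoc, ← Real.exp_add]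
  ring_nf

lemma continuous_airyRayIntegrand (n k : ℕ) (ε : ℂ) (x : ℝ) :
    Continuous (airyRayIntegrand n k ε x) := by
  unfold airyRayIntegrand
  fun_prop

lemma norm_cexp_airyRay_le (n : ℕ) {ε : ℂ} {x b r : ℝ} (hb : |x| * ‖ε‖ ≤ b) (hr : 0 ≤ r) :
    ‖Complex.exp (-(x : ℂ) * r * ε - (r : ℂ) ^ (n + 1) / (n + 1))‖ ≤
      Real.exp (b * r - r ^ (n + 1) / (n + 1)) := by
  have hpow : ((r : ℂ) ^ (n + 1) / (n + 1)) = ((r ^ (n + 1) / (n + 1) : ℝ) : ℂ) := by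
    push_cast; ring
  have hlin : (-(x : ℂ) * r * ε).re ≤ b * r :=
    calc (-(x : ℂ) * r * ε).re ≤ ‖-(x : ℂ) * r * ε‖ := Complex.re_le_norm _
      _ = |x| * ‖ε‖ * r := by simp [abs_of_nonneg hr]; ring
      _ ≤ b * r := by gcongr
  rw [Complex.norm_exp, Real.exp_le_exp, Complex.sub_re, hpow, Complex.ofReal_re]
  linarith

lemma norm_airyRayIntegrand_le (n k : ℕ) {ε : ℂ} {x b r : ℝ} (hb : |x| * ‖ε‖ ≤ b)
    (hr : 0 ≤ r) :
    ‖airyRayIntegrand n k ε x r‖ ≤ ‖ε‖ ^ (k + 1) * airyMajorant n k b r := by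
  have hexp := norm_cexp_airyRay_le n hb hr
  calc ‖airyRayIntegrand n k ε x r‖
      = ‖ε‖ ^ (k + 1) * r ^ k *
          ‖Complex.exp (-(x : ℂ) * r * ε - (r : ℂ) ^ (n + 1) / (n + 1))‖ := by
        simp [airyRayIntegrand, abs_of_nonneg hr]; ring
    _ ≤ ‖ε‖ ^ (k + 1) * airyMajorant n k b r := by
        rw [airyMajorant, ← mul_assoc]; gcongr

lemma integrableOn_airyRayIntegrand {n : ℕ} (hn : 1 ≤ n) (k : ℕ) (ε : ℂ) (x : ℝ) :
    IntegrableOn (airyRayIntegrand n k ε x) (Ioi 0) := by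
  refine (((integrableOn_airyMajorant hn k (|x| * ‖ε‖)).const_mul (‖ε‖ ^ (k + 1)))).mono'
    (continuous_airyRayIntegrand n k ε x).aestronglyMeasurable.restrict ?_
  filter_upwards [ae_restrict_mem measurableSet_Ioi] with r hr
  exact norm_airyRayIntegrand_le n k le_rfl (le_of_lt hr)

lemma hasDerivAt_airyRayIntegrand (n k : ℕ) (ε : ℂ) (x r : ℝ) :
    HasDerivAt (fun y : ℝ => airyRayIntegrand n k ε y r)
      (-airyRayIntegrand n (k + 1) ε x r) x := by
  have hexponent : HasDerivAt (fun y : ℝ => -(y : ℂ) * r * ε - (r : ℂ) ^ (n + 1) / (n + 1))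
      (-(r * ε)) x := by
    simpa [mul_assoc] using
      (((Complex.ofRealCLM.hasDerivAt (x := x)).neg.mul_const (r * ε)).sub_const
        ((r : ℂ) ^ (n + 1) / (n + 1)))
  refine (hexponent.cexp.const_mul (ε * ((r : ℂ) * ε) ^ k)).congr_deriv ?_
  simp only [airyRayIntegrand]
  ring

lemma hasDerivAt_airyRayIntegral {n : ℕ} (hn : 1 ≤ n) (k : ℕ) (ε : ℂ) (x : ℝ) :
    HasDerivAt (airyRayIntegral n k ε) (-airyRayIntegral n (k + 1) ε x) x := by
  have hbound : ∀ᵐ r ∂volume.restrict (Ioi (0 : ℝ)), ∀ y ∈ Metric.ball x 1,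
      ‖-airyRayIntegrand n (k + 1) ε y r‖ ≤
        ‖ε‖ ^ (k + 2) * airyMajorant n (k + 1) ((|x| + 1) * ‖ε‖) r := by
    filter_upwards [ae_restrict_mem measurableSet_Ioi] with r hr y hy
    have hyx : |y| ≤ |x| + 1 := by
      have := abs_sub_abs_le_abs_sub y x
      rw [Metric.mem_ball, Real.dist_eq] at hy
      linarith
    rw [norm_neg]
    exact norm_airyRayIntegrand_le n (k + 1) (by gcongr) (le_of_lt hr)
  have hderiv := hasDerivAt_integral_of_dominated_loc_of_deriv_le
    (Metric.ball_mem_nhds x one_pos)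
    (Eventually.of_forall fun y => (continuous_airyRayIntegrand n k ε y).aestronglyMeasurable)
    (integrableOn_airyRayIntegrand hn k ε x)
    (continuous_airyRayIntegrand n (k + 1) ε x).neg.aestronglyMeasurable hbound
    ((integrableOn_airyMajorant hn (k + 1) _).const_mul _)
    (Eventually.of_forall fun r y _ => hasDerivAt_airyRayIntegrand n k ε y r)
  rw [integral_neg] at hderiv
  exact hderiv.2

lemma hasDerivAt_cexp_airyRay {n : ℕ} {ε : ℂ} (hε : ε ^ (n + 1) = -1) (x r : ℝ) :
    HasDerivAt (fun s : ℝ => Complex.exp (-(x : ℂ) * s * ε - (s : ℂ) ^ (n + 1) / (n + 1)))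
      (-x * airyRayIntegrand n 0 ε x r + airyRayIntegrand n n ε x r) r := by
  have hexponent : HasDerivAt (fun s : ℝ => -(x : ℂ) * s * ε - (s : ℂ) ^ (n + 1) / (n + 1))
      (-x * ε - (r : ℂ) ^ n) r := by
    have hpow := (hasDerivAt_pow (n + 1) r).ofReal_comp.div_const ((n : ℂ) + 1)
    refine ((((Complex.ofRealCLM.hasDerivAt (x := r)).const_mul (-(x : ℂ))).mul_const ε).sub
      (hpow.congr_of_eventuallyEq (.of_forall fun s => by push_cast; rfl))).congr_deriv ?_
    rw [Complex.ofRealCLM_apply, Complex.ofReal_one]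
    field_simp
    push_cast
    ring
  refine hexponent.cexp.congr_deriv ?_
  simp only [airyRayIntegrand]
  linear_combination
    (-(r : ℂ) ^ n * Complex.exp (-(x : ℂ) * r * ε - (r : ℂ) ^ (n + 1) / (n + 1))) * hε

lemma airyRayIntegral_self {n : ℕ} (hn : 1 ≤ n) {ε : ℂ} (hε : ε ^ (n + 1) = -1) (x : ℝ) :
    airyRayIntegral n n ε x = x * airyRayIntegral n 0 ε x - 1 := by
  have hcont : ContinuousWithinAt
      (fun s : ℝ => Complex.exp (-(x : ℂ) * s * ε - (s : ℂ) ^ (n + 1) / (n + 1))) (Ici 0) 0 :=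
    Continuous.continuousWithinAt (by fun_prop)
  have hlim : Tendsto
      (fun s : ℝ => Complex.exp (-(x : ℂ) * s * ε - (s : ℂ) ^ (n + 1) / (n + 1)))
      atTop (𝓝 0) := by
    refine squeeze_zero_norm' ?_
      (tendsto_exp_atBot.comp (tendsto_mul_sub_pow_div_atBot hn (|x| * ‖ε‖)))
    filter_upwards [eventually_ge_atTop 0] with s hs
    exact norm_cexp_airyRay_le n le_rfl hs
  have hftc := integral_Ioi_of_hasDerivAt_of_tendsto hcont
    (fun r _ => hasDerivAt_cexp_airyRay hε x r)
    (((integrableOn_airyRayIntegrand hn 0 ε x).const_mul _).add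
      (integrableOn_airyRayIntegrand hn n ε x))
    hlim
  rw [integral_add ((integrableOn_airyRayIntegrand hn 0 ε x).const_mul _)
    (integrableOn_airyRayIntegrand hn n ε x), integral_const_mul] at hftc
  have hzero : Complex.exp (-(x : ℂ) * (0 : ℝ) * ε - ((0 : ℝ) : ℂ) ^ (n + 1) / (n + 1)) = 1 := by
    simp
  rw [hzero] at hftc
  unfold airyRayIntegral
  linear_combination hftc

lemma cexp_I_mul_pow_eq_neg_one {n : ℕ} {θ : ℝ} (hθ : θ = π / (n + 1)) :
    Complex.exp (Complex.I * θ) ^ (n + 1) = -1 := by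
  rw [← Complex.exp_nat_mul, ← Complex.exp_pi_mul_I, hθ]
  congr 1
  push_cast
  field_simp

/-- the `𝔰𝔩ₙ`-Airy function. The contour integrals `Ψⱼ` converge
absolutely, are differentiable, and solve the system `Ψⱼ' = −Ψ_{j+1}`
(`1 ≤ j ≤ n−1`), `Ψₙ' = −x·Ψ₁`, i.e. `Ψ' + (e + x·e₀)Ψ = 0`. -/
theorem sl_n_airy_function
    (n : ℕ) (hn : 2 ≤ n) (θ : ℝ) (hθ : θ = π / (n + 1))
    (Ψ : ℕ → ℝ → ℂ)
    (hΨ : ∀ j : ℕ, ∀ x : ℝ, Ψ j x = (2 * (π : ℂ) * Complex.I)⁻¹ *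
      ∫ r in Set.Ioi (0 : ℝ),
        (Complex.exp (Complex.I * θ) * ((r : ℂ) * Complex.exp (Complex.I * θ)) ^ (j - 1) *
            Complex.exp (-(x : ℂ) * r * Complex.exp (Complex.I * θ) -
              (r : ℂ) ^ (n + 1) / (n + 1)) -
          Complex.exp (-(Complex.I * θ)) *
            ((r : ℂ) * Complex.exp (-(Complex.I * θ))) ^ (j - 1) *
            Complex.exp (-(x : ℂ) * r * Complex.exp (-(Complex.I * θ)) -
              (r : ℂ) ^ (n + 1) / (n + 1)))) :
    (∀ j : ℕ, 1 ≤ j → j ≤ n → ∀ x : ℝ, IntegrableOn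
      (fun r : ℝ =>
        Complex.exp (Complex.I * θ) * ((r : ℂ) * Complex.exp (Complex.I * θ)) ^ (j - 1) *
            Complex.exp (-(x : ℂ) * r * Complex.exp (Complex.I * θ) -
              (r : ℂ) ^ (n + 1) / (n + 1)) -
          Complex.exp (-(Complex.I * θ)) *
            ((r : ℂ) * Complex.exp (-(Complex.I * θ))) ^ (j - 1) *
            Complex.exp (-(x : ℂ) * r * Complex.exp (-(Complex.I * θ)) -
              (r : ℂ) ^ (n + 1) / (n + 1)))
      (Set.Ioi (0 : ℝ))) ∧
    (∀ j : ℕ, 1 ≤ j → j ≤ n - 1 → ∀ x : ℝ,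
      HasDerivAt (Ψ j) (-(Ψ (j + 1) x)) x) ∧
    (∀ x : ℝ, HasDerivAt (Ψ n) (-(x : ℂ) * Ψ 1 x) x) := by
  have hn₁ : 1 ≤ n := by omega
  set εp := Complex.exp (Complex.I * θ)
  set εm := Complex.exp (-(Complex.I * θ))
  have hεp : εp ^ (n + 1) = -1 := cexp_I_mul_pow_eq_neg_one hθ
  have hεm : εm ^ (n + 1) = -1 := by
    rw [show εm = εp⁻¹ from Complex.exp_neg _, inv_pow, hεp, inv_neg, inv_one]
  have hΨ_ray (j : ℕ) : Ψ j = fun x => (2 * (π : ℂ) * Complex.I)⁻¹ *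
      (airyRayIntegral n (j - 1) εp x - airyRayIntegral n (j - 1) εm x) := by
    funext x
    rw [hΨ, airyRayIntegral, airyRayIntegral,
      ← integral_sub (integrableOn_airyRayIntegrand hn₁ _ εp x)
        (integrableOn_airyRayIntegrand hn₁ _ εm x)]
    rfl
  have hderiv (j : ℕ) (hj : 1 ≤ j) (x : ℝ) : HasDerivAt (Ψ j) ((2 * (π : ℂ) * Complex.I)⁻¹ *
      (-airyRayIntegral n j εp x - -airyRayIntegral n j εm x)) x := by
    rw [hΨ_ray]
    have h := ((hasDerivAt_airyRayIntegral hn₁ (j - 1) εp x).sub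
      (hasDerivAt_airyRayIntegral hn₁ (j - 1) εm x)).const_mul (2 * (π : ℂ) * Complex.I)⁻¹
    rwa [Nat.sub_add_cancel hj] at h
  refine ⟨fun j _ _ x => (integrableOn_airyRayIntegrand hn₁ (j - 1) εp x).sub
    (integrableOn_airyRayIntegrand hn₁ (j - 1) εm x), fun j hj _ x => ?_, fun x => ?_⟩
  · convert hderiv j hj x using 1
    rw [hΨ_ray, Nat.add_sub_cancel]
    ring
  · convert hderiv n hn₁ x using 1
    rw [hΨ_ray, airyRayIntegral_self hn₁ hεp, airyRayIntegral_self hn₁ hεm]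
    ring
end
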